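/- arXiv:1711.01785 — 10 statements merged into one kernel-verified Lean document; each statement's English description precedes it below -/
import Mathlib

section
/- Let L be a complete lattice in which every element is the supremum of a set of compact elements (L is algebraic/compactly generated). Then L is arrow-separated: for all x, y ∈ L with x < y there exist u, v ∈ L with x ≤ u, u ⋖ v (v covers u), and v ≤ y. -/
/-!
Pick a compact `c ≤ y` with `c ≰ x`; it exists because `y` is a join of compact elements.
By Zorn's lemma there is an element `u` maximal in `[x, x ⊔ c]` among those not above `c`:
a chain there has a directed join, which compactness of `c` keeps from lying above `c`.
Any `w` strictly between `u` and `x ⊔ c` lies above `c` by maximality, hence above `x ⊔ c`;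
so `u ⋖ x ⊔ c ≤ y`.
-/

section

open CompleteLattice

variable {α : Type*} [CompleteLattice α]

theorem isCompactElement_of_exists_finite_le_sSup {c : α}
    (h : ∀ U : Set α, c ≤ sSup U → ∃ F ⊆ U, F.Finite ∧ c ≤ sSup F) : IsCompactElement c := by
  rw [isCompactElement_iff_exists_le_sSup_of_le_sSup]
  intro s hs
  obtain ⟨F, hFs, hF, hcF⟩ := h s hs
  exact ⟨hF.toFinset, by simpa using hFs, by simpa [Finset.sup_id_eq_sSup] using hcF⟩

theorem IsCompactElement.exists_le_covBy_sup {c x : α} (hc : IsCompactElement c)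
    (hcx : ¬c ≤ x) : ∃ u, x ≤ u ∧ u ⋖ x ⊔ c := by
  set P : Set α := {z | x ≤ z ∧ z ≤ x ⊔ c ∧ ¬c ≤ z}
  obtain ⟨u, hxu, hu⟩ : ∃ u, x ≤ u ∧ Maximal (· ∈ P) u := by
    refine zorn_le_nonempty₀ P (fun C hCP hC z hz ↦ ⟨sSup C, ⟨?_, ?_, ?_⟩, fun _ ↦ le_sSup⟩) x
      ⟨le_rfl, le_sup_left, hcx⟩
    · exact (hCP hz).1.trans (le_sSup hz)
    · exact sSup_le fun w hw ↦ (hCP hw).2.1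
    · intro hcC
      obtain ⟨w, hwC, hcw⟩ :=
        (isCompactElement_iff_le_of_directed_sSup_le α c).mp hc C ⟨z, hz⟩ hC.directedOn hcC
      exact (hCP hwC).2.2 hcw
  obtain ⟨-, hux, hcu⟩ := hu.prop
  refine ⟨u, hxu, hux.lt_of_ne (by rintro rfl; exact hcu le_sup_right), fun w huw hwx ↦ ?_⟩
  have hcw : c ≤ w := by
    by_contra hcw
    exact huw.not_ge (hu.le_of_ge ⟨hxu.trans huw.le, hwx.le, hcw⟩ huw.le)
  exact hwx.not_ge (sup_le (hxu.trans huw.le) hcw)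

theorem CompleteLattice.exists_le_covBy_le_of_lt [IsCompactlyGenerated α] {x y : α} (hxy : x < y) :
    ∃ u v, x ≤ u ∧ u ⋖ v ∧ v ≤ y := by
  obtain ⟨c, hc, hcy, hcx⟩ : ∃ c, IsCompactElement c ∧ c ≤ y ∧ ¬c ≤ x := by
    simpa using mt le_iff_compact_le_imp.mpr hxy.not_ge
  obtain ⟨u, hxu, hu⟩ := hc.exists_le_covBy_sup hcx
  exact ⟨u, x ⊔ c, hxu, hu, sup_le hxy.le hcy⟩

end

/-- If `L` is a complete lattice in which every element is the supremum of a set of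
compact elements (i.e. `L` is algebraic), then `L` is arrow-separated: whenever
`x < y` there is a covering pair `u ⋖ v` with `x ≤ u` and `v ≤ y`. -/
theorem algebraic_arrow_separated {L : Type*} [CompleteLattice L]
    (halg : ∀ x : L, ∃ S : Set L,
      (∀ c ∈ S, ∀ U : Set L, c ≤ sSup U → ∃ F ⊆ U, F.Finite ∧ c ≤ sSup F) ∧ x = sSup S) :
    ∀ x y : L, x < y → ∃ u v : L, x ≤ u ∧ u ⋖ v ∧ v ≤ y := by
  have : IsCompactlyGenerated L := ⟨fun x ↦
    let ⟨S, hS, hx⟩ := halg x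
    ⟨S, fun c hc ↦ isCompactElement_of_exists_finite_le_sSup (hS c hc), hx.symm⟩⟩
  exact fun x y ↦ CompleteLattice.exists_le_covBy_le_of_lt
end

section
/- Let L be a complete lattice in which every element is the infimum of a set of co-compact elements (L is co-algebraic). Then every x ∈ L is the supremum of the set of completely join-irreducible elements z ∈ L with z ≤ x; that is, x = sSup { z ∈ L | z is completely join-irreducible and z ≤ x }. -/
/-!
Fix a co-compact `c` with `x ≰ c`. Co-compactness makes the infimum of a chain of elements
`≰ c` again `≰ c`, so by Zorn there is a minimal `z ≤ x` with `z ≰ c`. Such a `z` is completely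
join-irreducible: if `z = sSup S` with `z ∉ S`, every member of `S` lies strictly below `z`, hence
below `c` by minimality, and then so does `z`. Writing the supremum of the completely
join-irreducible elements below `x` as an infimum of co-compact elements, `x` lies below each
of them.
-/

section

variable {L : Type*} [CompleteLattice L]

def IsCoCompactElement (c : L) : Prop :=
  ∀ U : Set L, sInf U ≤ c → ∃ F ⊆ U, F.Finite ∧ sInf F ≤ c

def CompletelySupIrred (z : L) : Prop :=
  ∀ S : Set L, z = sSup S → z ∈ S

theorem IsCoCompactElement.exists_le_of_isChain {c : L} (hc : IsCoCompactElement c) {C : Set L}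
    (hC : IsChain (· ≤ ·) C) (hne : C.Nonempty) (h : sInf C ≤ c) : ∃ a ∈ C, a ≤ c := by
  obtain ⟨F, hFC, hF, hFc⟩ := hc C h
  obtain rfl | hFne := F.eq_empty_or_nonempty
  · obtain ⟨y, hy⟩ := hne
    exact ⟨y, hy, le_top.trans (by simpa using hFc)⟩
  · obtain ⟨a, ha⟩ := hF.exists_minimal hFne
    have ha_least : a ≤ sInf F := le_sInf fun b hb =>
      ((hC.mono hFC).total ha.prop hb).elim id (ha.le_of_le hb)
    exact ⟨a, hFC ha.prop, ha_least.trans hFc⟩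

theorem IsCoCompactElement.exists_minimal_not_le {c x : L} (hc : IsCoCompactElement c)
    (hx : ¬ x ≤ c) : ∃ z ≤ x, Minimal (¬ · ≤ c) z := by
  let s : Set Lᵒᵈ := {m | ¬ OrderDual.ofDual m ≤ c}
  have hchain : ∀ C ⊆ s, IsChain (· ≤ ·) C → ∀ y ∈ C, ∃ lb ∈ s, ∀ w ∈ C, w ≤ lb := by
    intro C hCs hC y hy
    refine ⟨sSup C, fun hCc => ?_, fun w hw => le_sSup hw⟩
    -- `sSup C` in `Lᵒᵈ` is `sInf C` in `L`, and `C` is a chain for the order of `L` as well.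
    obtain ⟨a, haC, hac⟩ := hc.exists_le_of_isChain hC.symm ⟨y, hy⟩ hCc
    exact hCs haC hac
  obtain ⟨z, hzx, hz⟩ := zorn_le_nonempty₀ s hchain (OrderDual.toDual x) hx
  exact ⟨OrderDual.ofDual z, hzx, hz⟩

theorem completelySupIrred_of_minimal_not_le {c z : L} (hz : Minimal (¬ · ≤ c) z) :
    CompletelySupIrred z := by
  intro S hzS
  by_contra hnot
  refine hz.prop (hzS ▸ sSup_le fun u hu => ?_)
  by_contra huc
  have huz : u ≤ z := hzS ▸ le_sSup hu
  exact hnot (hz.eq_of_le huc huz ▸ hu)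

theorem IsCoCompactElement.exists_completelySupIrred_not_le {c x : L}
    (hc : IsCoCompactElement c) (hx : ¬ x ≤ c) : ∃ z ≤ x, CompletelySupIrred z ∧ ¬ z ≤ c :=
  let ⟨z, hzx, hz⟩ := hc.exists_minimal_not_le hx
  ⟨z, hzx, completelySupIrred_of_minimal_not_le hz, hz.prop⟩

end

/-- If `L` is a complete lattice in which every element is the infimum of a set of
co-compact elements (i.e. `L` is co-algebraic), then every `x ∈ L` is the supremum of
the completely join-irreducible elements below it. -/
theorem coalgebraic_sSup_completelyJoinIrreducible {L : Type*} [CompleteLattice L]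
    (hcoalg : ∀ x : L, ∃ S : Set L,
      (∀ c ∈ S, ∀ U : Set L, sInf U ≤ c → ∃ F ⊆ U, F.Finite ∧ sInf F ≤ c) ∧ x = sInf S) :
    ∀ x : L, x = sSup {z : L | (∀ S : Set L, z = sSup S → z ∈ S) ∧ z ≤ x} := by
  intro x
  refine le_antisymm ?_ (sSup_le fun z hz => hz.2)
  obtain ⟨T, hT, hJT⟩ := hcoalg (sSup {z : L | (∀ S : Set L, z = sSup S → z ∈ S) ∧ z ≤ x})
  refine (le_sInf fun c hc => ?_).trans hJT.ge
  by_contra hxc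
  obtain ⟨z, hzx, hzJ, hzc⟩ := IsCoCompactElement.exists_completelySupIrred_not_le (hT c hc) hxc
  exact hzc ((hJT.le.trans (sInf_le hc)).trans' (le_sSup ⟨hzJ, hzx⟩))
end

section
/- Let L be a completely semidistributive complete lattice, and suppose x covers y in L (y ⋖ x). Set j := sInf { z ∈ L | z ≤ x and z ≰ y }. Then: (1) y ⊔ j = x; in particular j ≤ x and j ≰ y; (2) j is completely join-irreducible; (3) sSup { w ∈ L | w < j } ≤ y. -/
/-- In a completely semidistributive complete lattice, if `x` covers `y` then
`j := sInf {z | z ≤ x ∧ z ≰ y}` satisfies: `y ⊔ j = x` (in particular `j ≤ x`, `j ≰ y`),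
`j` is completely join-irreducible, and `sSup {w | w < j} ≤ y`. -/
theorem covBy_completelyJoinIrreducible_of_semidistributive {L : Type*} [CompleteLattice L]
    (hmeet : ∀ (x : L) (S : Set L),
      (∀ y ∈ S, ∀ z ∈ S, x ⊓ y = x ⊓ z) → ∀ y ∈ S, x ⊓ sSup S = x ⊓ y)
    (hjoin : ∀ (x : L) (S : Set L),
      (∀ y ∈ S, ∀ z ∈ S, x ⊔ y = x ⊔ z) → ∀ y ∈ S, x ⊔ sInf S = x ⊔ y)
    (x y : L) (hxy : y ⋖ x)
    (j : L) (hj : j = sInf {z : L | z ≤ x ∧ ¬ z ≤ y}) :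
    (y ⊔ j = x ∧ j ≤ x ∧ ¬ j ≤ y) ∧
    (∀ S : Set L, j = sSup S → j ∈ S) ∧
    sSup {w : L | w < j} ≤ y := by
  set S : Set L := {z : L | z ≤ x ∧ ¬ z ≤ y} with hS
  -- every element of S joins with y to give x
  have hsup : ∀ z ∈ S, y ⊔ z = x := by
    intro z hz
    have h1 : y < y ⊔ z := by
      rcases lt_or_eq_of_le (le_sup_left : y ≤ y ⊔ z) with h | h
      · exact h
      · exact absurd (sup_eq_left.mp h.symm) hz.2
    have h2 : y ⊔ z ≤ x := sup_le hxy.1.le hz.1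
    rcases lt_or_eq_of_le h2 with h | h
    · exact absurd h (hxy.2 h1)
    · exact h
  have hxS : x ∈ S := ⟨le_rfl, fun h => absurd (lt_of_lt_of_le hxy.1 h) (lt_irrefl y)⟩
  have hyj : y ⊔ j = x := by
    rw [hj]
    have := hjoin y S (fun a ha b hb => (hsup a ha).trans (hsup b hb).symm) x hxS
    rw [this, hsup x hxS]
  have hjx : j ≤ x := hj ▸ sInf_le hxS
  have hjy : ¬ j ≤ y := by
    intro h
    have : y ⊔ j = y := sup_eq_left.mpr h
    rw [hyj] at this
    exact absurd (this ▸ hxy.1) (lt_irrefl x)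
  -- every w < j satisfies w ≤ y
  have hlt : ∀ w : L, w < j → w ≤ y := by
    intro w hw
    by_contra hwy
    have : w ∈ S := ⟨hw.le.trans hjx, hwy⟩
    exact absurd (hj ▸ sInf_le this) (not_le_of_gt hw)
  refine ⟨⟨hyj, hjx, hjy⟩, ?_, sSup_le fun w hw => hlt w hw⟩
  intro T hT
  by_contra hjT
  have : ∀ w ∈ T, w ≤ y := by
    intro w hw
    refine hlt w (lt_of_le_of_ne (hT ▸ le_sSup hw) ?_)
    rintro rfl
    exact hjT hw
  exact hjy (hT ▸ sSup_le this)
end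

section
/- Let L and L' be complete lattices and f : L → L' a surjective morphism of complete lattices, i.e. f(sSup S) = sSup (f '' S) and f(sInf S) = sInf (f '' S) for every subset S ⊆ L. Then the following are equivalent: (1) the congruence induced by f is arrow-determined, i.e. for all x ≤ y in L, f x = f y holds if and only if f u = f v for every covering pair u ⋖ v with x ≤ u and v ≤ y; (2) L' is arrow-separated, i.e. for all a, b ∈ L' with a < b there exist u', v' ∈ L' with a ≤ u', u' ⋖ v', and v' ≤ b. -/
/-- Let `f : L → L'` be a surjective morphism of complete lattices. Then the congruence
induced by `f` is arrow-determined (for `x ≤ y`, `f x = f y` iff `f` contracts every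
covering pair inside the interval `[x, y]`) if and only if `L'` is arrow-separated
(every pair `a < b` in `L'` bounds a covering pair). -/
theorem arrowDetermined_iff_arrowSeparated {L L' : Type*} [CompleteLattice L]
    [CompleteLattice L'] (f : L → L') (hsurj : Function.Surjective f)
    (hsup : ∀ S : Set L, f (sSup S) = sSup (f '' S))
    (hinf : ∀ S : Set L, f (sInf S) = sInf (f '' S)) :
    (∀ x y : L, x ≤ y → (f x = f y ↔ ∀ u v : L, x ≤ u → u ⋖ v → v ≤ y → f u = f v)) ↔
    (∀ a b : L', a < b → ∃ u' v' : L', a ≤ u' ∧ u' ⋖ v' ∧ v' ≤ b) := by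
  have hsup2 : ∀ a b : L, f (a ⊔ b) = f a ⊔ f b := by
    intro a b
    have := hsup {a, b}
    rwa [sSup_pair, Set.image_pair, sSup_pair] at this
  have hinf2 : ∀ a b : L, f (a ⊓ b) = f a ⊓ f b := by
    intro a b
    have := hinf {a, b}
    rwa [sInf_pair, Set.image_pair, sInf_pair] at this
  have hmono : Monotone f := by
    intro a b hab
    have h := hsup2 a b
    rw [sup_eq_right.mpr hab] at h
    exact le_sup_left.trans h.ge
  constructor
  · -- arrow-determined → arrow-separated
    intro h a b hab
    obtain ⟨x, hx⟩ := hsurj a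
    obtain ⟨y₀, hy₀⟩ := hsurj b
    set y := x ⊔ y₀ with hy
    have hfy : f y = b := by rw [hy, hsup2, hx, hy₀, sup_eq_right.mpr hab.le]
    have hxy : x ≤ y := le_sup_left
    have hne : f x ≠ f y := by rw [hx, hfy]; exact hab.ne
    have hnall := mt (h x y hxy).mpr hne
    push_neg at hnall
    obtain ⟨u, v, hxu, huv, hvy, hne2⟩ := hnall
    have hfuv : f u < f v := (hmono huv.le).lt_of_ne hne2
    refine ⟨f u, f v, ?_, ⟨hfuv, ?_⟩, ?_⟩
    · rw [← hx]; exact hmono hxu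
    · intro c hc1 hc2
      obtain ⟨w, hw⟩ := hsurj c
      have hm : f (u ⊔ (v ⊓ w)) = c := by
        rw [hsup2, hinf2, hw, inf_eq_right.mpr hc2.le, sup_eq_right.mpr hc1.le]
      rcases huv.eq_or_eq le_sup_left (sup_le huv.le inf_le_left) with he | he
      · exact hc1.ne' (by rw [← hm, he])
      · exact hc2.ne (by rw [← hm, he])
    · rw [← hfy]; exact hmono hvy
  · -- arrow-separated → arrow-determined
    intro h x y hxy
    constructor
    · intro hfxy u v hxu huv hvy
      exact le_antisymm (hmono huv.le)
        ((hmono hvy).trans (hfxy.ge.trans (hmono hxu)))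
    · intro hall
      by_contra hne
      have hlt : f x < f y := (hmono hxy).lt_of_ne hne
      obtain ⟨u', v', hau, hcov, hvb⟩ := h _ _ hlt
      obtain ⟨p, hp⟩ := hsurj v'
      obtain ⟨q, hq⟩ := hsurj u'
      set A : Set L := {z | x ≤ z ∧ z ≤ y ∧ f z ≤ u'} with hA
      set u₀ := sSup A with hu₀
      have hxA : x ∈ A := ⟨le_rfl, hxy, hau⟩
      have hxu₀ : x ≤ u₀ := le_sSup hxA
      have hu₀y : u₀ ≤ y := sSup_le fun z hz => hz.2.1
      have hfu₀ : f u₀ ≤ u' := by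
        rw [hu₀, hsup]
        exact sSup_le (by rintro _ ⟨z, hz, rfl⟩; exact hz.2.2)
      set B : Set L := {z | u₀ ≤ z ∧ z ≤ y ∧ v' ≤ f z} with hB
      have hfm : f (u₀ ⊔ (y ⊓ p)) = v' := by
        rw [hsup2, hinf2, hp, inf_eq_right.mpr hvb,
          sup_eq_right.mpr (hfu₀.trans hcov.le)]
      have hmemB : u₀ ⊔ (y ⊓ p) ∈ B :=
        ⟨le_sup_left, sup_le hu₀y inf_le_left, hfm.ge⟩
      set v₀ := sInf B with hv₀
      have hfv₀ : f v₀ = v' := by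
        refine le_antisymm ((hmono (sInf_le hmemB)).trans hfm.le) ?_
        rw [hv₀, hinf]
        exact le_sInf (by rintro _ ⟨z, hz, rfl⟩; exact hz.2.2)
      have hu₀v₀ : u₀ ≤ v₀ := le_sInf fun z hz => hz.1
      have hv₀y : v₀ ≤ y := (sInf_le hmemB).trans (sup_le hu₀y inf_le_left)
      have hne' : f u₀ ≠ f v₀ := by
        rw [hfv₀]; exact (hfu₀.trans_lt hcov.lt).ne
      have hqle : v₀ ⊓ q ≤ u₀ := by
        have hmem : u₀ ⊔ (v₀ ⊓ q) ∈ A := by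
          refine ⟨hxu₀.trans le_sup_left, sup_le hu₀y (inf_le_left.trans hv₀y), ?_⟩
          rw [hsup2, hinf2, hq, hfv₀, inf_eq_right.mpr hcov.le]
          exact sup_le hfu₀ le_rfl
        exact le_sup_right.trans (le_sSup hmem)
      have hcov₀ : u₀ ⋖ v₀ := by
        refine ⟨hu₀v₀.lt_of_ne (fun he => hne' (congrArg f he)), ?_⟩
        intro z hz1 hz2
        have hzA : ¬ f z ≤ u' := fun hfz =>
          hz1.not_ge (le_sSup ⟨hxu₀.trans hz1.le, hz2.le.trans hv₀y, hfz⟩)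
        have h1 : u' ⊔ f z = v' := by
          have hle : u' ⊔ f z ≤ v' :=
            sup_le hcov.le ((hmono hz2.le).trans_eq hfv₀)
          rcases eq_or_lt_of_le hle with he | hltv
          · exact he
          · exact absurd hltv (hcov.2 (left_lt_sup.mpr hzA))
        have hzB : z ⊔ (v₀ ⊓ q) ∈ B := by
          refine ⟨hz1.le.trans le_sup_left,
            sup_le (hz2.le.trans hv₀y) (inf_le_left.trans hv₀y), ?_⟩
          rw [hsup2, hinf2, hq, hfv₀, inf_eq_right.mpr hcov.le, sup_comm, h1]
        have : v₀ ≤ z := (sInf_le hzB).trans (sup_le le_rfl (hqle.trans hz1.le))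
        exact hz2.not_ge this
      exact hne' (hall u₀ v₀ hxu₀ hcov₀ hv₀y)
end

section
/- Let k be a field and A a finite-dimensional k-algebra. (i) Let T be a torsion class in mod A and 𝒮 a set of torsion classes in mod A such that T ∩ U = T ∩ V for all U, V ∈ 𝒮. Then the smallest torsion class J containing every member of 𝒮 satisfies T ∩ J = T ∩ U for every U ∈ 𝒮. (ii) Dually, writing T ∨ U for the smallest torsion class containing both T and U: if T ∨ U = T ∨ V for all U, V ∈ 𝒮, then T ∨ (⋂𝒮) = T ∨ U for every U ∈ 𝒮. (Thus the complete lattice of torsion classes of mod A is completely semidistributive.) -/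
universe u

/-- A torsion class in the category `mod A` of finitely generated `A`-modules:
a class of finitely generated modules, containing the zero modules, closed under
isomorphism, images of surjective homomorphisms (factor modules) and extensions. -/
def IsTorsionClass (A : Type u) [Ring A] (T : Set (ModuleCat.{u} A)) : Prop :=
  (∀ M ∈ T, Module.Finite A M) ∧
  (∀ M : ModuleCat.{u} A, Subsingleton M → M ∈ T) ∧
  (∀ M N : ModuleCat.{u} A, M ∈ T → Nonempty (M ≃ₗ[A] N) → N ∈ T) ∧
  (∀ (M N : ModuleCat.{u} A) (f : M →ₗ[A] N), Function.Surjective f → M ∈ T → N ∈ T) ∧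
  (∀ (M : ModuleCat.{u} A) (S : Submodule A M),
     ModuleCat.of A S ∈ T → ModuleCat.of A (M ⧸ S) ∈ T → M ∈ T)

/-- The smallest torsion class containing a class `C` of modules: the intersection of
all torsion classes containing `C`. -/
def torsGen (A : Type u) [Ring A] (C : Set (ModuleCat.{u} A)) : Set (ModuleCat.{u} A) :=
  ⋂₀ {T | IsTorsionClass A T ∧ C ⊆ T}

/-- A brick: a nonzero finitely generated module all of whose nonzero endomorphisms are
invertible. -/
def IsBrick (A : Type u) [Ring A] (S : ModuleCat.{u} A) : Prop :=
  Nontrivial S ∧ Module.Finite A S ∧ ∀ f : S →ₗ[A] S, f ≠ 0 → Function.Bijective f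

section Helpers

variable {A : Type u} [Ring A]

namespace TorsAux

variable {T U : Set (ModuleCat.{u} A)}

theorem mem_zero (hT : IsTorsionClass A T) (X : Type u) [AddCommGroup X] [Module A X]
    (h : Subsingleton X) : ModuleCat.of A X ∈ T :=
  hT.2.1 (ModuleCat.of A X) h

theorem mem_iso (hT : IsTorsionClass A T) {X Y : Type u} [AddCommGroup X] [Module A X]
    [AddCommGroup Y] [Module A Y] (e : X ≃ₗ[A] Y) (h : ModuleCat.of A X ∈ T) :
    ModuleCat.of A Y ∈ T :=
  hT.2.2.1 (ModuleCat.of A X) (ModuleCat.of A Y) h ⟨e⟩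

theorem mem_quot (hT : IsTorsionClass A T) {X Y : Type u} [AddCommGroup X] [Module A X]
    [AddCommGroup Y] [Module A Y] (f : X →ₗ[A] Y) (hf : Function.Surjective f)
    (h : ModuleCat.of A X ∈ T) : ModuleCat.of A Y ∈ T :=
  hT.2.2.2.1 (ModuleCat.of A X) (ModuleCat.of A Y) f hf h

theorem mem_ext (hT : IsTorsionClass A T) {X : Type u} [AddCommGroup X] [Module A X]
    (S : Submodule A X) (h1 : ModuleCat.of A S ∈ T) (h2 : ModuleCat.of A (X ⧸ S) ∈ T) :
    ModuleCat.of A X ∈ T :=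
  hT.2.2.2.2 (ModuleCat.of A X) S h1 h2

theorem mem_fin (hT : IsTorsionClass A T) {X : Type u} [AddCommGroup X] [Module A X]
    (h : ModuleCat.of A X ∈ T) : Module.Finite A X :=
  hT.1 _ h

/-- the quotient of a submodule under a linear map, as a member of a torsion class -/
theorem mem_map (hT : IsTorsionClass A T) {X Y : Type u} [AddCommGroup X] [Module A X]
    [AddCommGroup Y] [Module A Y] (f : X →ₗ[A] Y) (S : Submodule A X)
    (h : ModuleCat.of A S ∈ T) : ModuleCat.of A (S.map f) ∈ T := by
  have hs : Function.Surjective (f.comp S.subtype).rangeRestrict :=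
    LinearMap.surjective_rangeRestrict _
  have h2 : ModuleCat.of A (LinearMap.range (f.comp S.subtype)) ∈ T :=
    mem_quot hT _ hs h
  have he : LinearMap.range (f.comp S.subtype) = S.map f := by
    rw [LinearMap.range_comp, Submodule.range_subtype]
  exact mem_iso hT (LinearEquiv.ofEq _ _ he) h2

/-- a submodule of a submodule, as member of a torsion class -/
theorem mem_comap_subtype (hT : IsTorsionClass A T) {X : Type u} [AddCommGroup X] [Module A X]
    {S W : Submodule A X} (hle : W ≤ S) (h : ModuleCat.of A W ∈ T) :
    ModuleCat.of A (W.comap S.subtype) ∈ T :=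
  mem_iso hT (Submodule.comapSubtypeEquivOfLe hle).symm h

theorem sInter_isTorsionClass {𝒞 : Set (Set (ModuleCat.{u} A))} (h : ∀ U ∈ 𝒞, IsTorsionClass A U)
    (hne : 𝒞.Nonempty) : IsTorsionClass A (⋂₀ 𝒞) := by
  obtain ⟨U0, hU0⟩ := hne
  refine ⟨fun M hM => (h U0 hU0).1 M (hM U0 hU0), ?_, ?_, ?_, ?_⟩
  · exact fun M hM U hU => (h U hU).2.1 M hM
  · exact fun M N hM he U hU => (h U hU).2.2.1 M N (hM U hU) he
  · exact fun M N f hf hM U hU => (h U hU).2.2.2.1 M N f hf (hM U hU)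
  · exact fun M S h1 h2 U hU => (h U hU).2.2.2.2 M S (h1 U hU) (h2 U hU)

theorem top_isTorsionClass [IsNoetherianRing A] :
    IsTorsionClass A {M : ModuleCat.{u} A | Module.Finite A M} := by
  refine ⟨fun M hM => hM, fun M hM => ?_, fun M N hM ⟨e⟩ => ?_, fun M N f hf hM => ?_,
    fun M S h1 h2 => ?_⟩
  · exact Module.Finite.of_surjective (0 : (⊥ : Submodule A M) →ₗ[A] M)
      (fun x => ⟨0, (Subsingleton.elim _ x)⟩)
  · haveI : Module.Finite A M := hM
    exact Module.Finite.equiv e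
  · haveI : Module.Finite A M := hM
    exact Module.Finite.of_surjective f hf
  · haveI : Module.Finite A S := h1
    haveI : Module.Finite A (M ⧸ S) := h2
    haveI : IsNoetherian A S := isNoetherian_of_isNoetherianRing_of_finite A S
    haveI : IsNoetherian A (M ⧸ S) := isNoetherian_of_isNoetherianRing_of_finite A (M ⧸ S)
    haveI : IsNoetherian A M := (isNoetherian_iff_submodule_quotient S).mpr ⟨‹_›, ‹_›⟩
    show Module.Finite A M
    infer_instance

theorem subset_torsGen {C : Set (ModuleCat.{u} A)} : C ⊆ torsGen A C :=
  Set.subset_sInter fun _ h => h.2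

theorem torsGen_subset {C W : Set (ModuleCat.{u} A)} (hW : IsTorsionClass A W) (h : C ⊆ W) :
    torsGen A C ⊆ W :=
  Set.sInter_subset_of_mem ⟨hW, h⟩

theorem torsGen_isTorsionClass [IsNoetherianRing A] {C : Set (ModuleCat.{u} A)}
    (h : ∀ M ∈ C, Module.Finite A M) : IsTorsionClass A (torsGen A C) :=
  sInter_isTorsionClass (fun _ hU => hU.1) ⟨_, top_isTorsionClass, h⟩

end TorsAux
end Helpers
section Helpers2
variable {A : Type u} [Ring A]
namespace TorsAux

/-- "`X` has no nonzero submodule belonging to `U`". -/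
def NoSub (U : Set (ModuleCat.{u} A)) (X : Type u) [AddCommGroup X] [Module A X] : Prop :=
  ∀ S : Submodule A X, ModuleCat.of A S ∈ U → S = ⊥

theorem map_subtype_eq_bot {X : Type u} [AddCommGroup X] [Module A X] {S : Submodule A X}
    {W : Submodule A S} (h : W.map S.subtype = ⊥) : W = ⊥ := by
  rw [eq_bot_iff] at h ⊢
  intro x hx
  have hm : S.subtype x ∈ W.map S.subtype := ⟨x, hx, rfl⟩
  have hz := h hm
  rw [Submodule.mem_bot] at hz ⊢
  exact Subtype.ext hz

variable {U T V : Set (ModuleCat.{u} A)}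

theorem noSub_equiv {X Y : Type u} [AddCommGroup X] [Module A X] [AddCommGroup Y] [Module A Y]
    (hU : IsTorsionClass A U) (e : X ≃ₗ[A] Y) (h : NoSub U X) : NoSub U Y := by
  intro W hW
  have h1 : ModuleCat.of A (W.map e.symm.toLinearMap) ∈ U := mem_map hU _ _ hW
  have h2 := h _ h1
  ext x
  simp only [Submodule.mem_bot]
  constructor
  · intro hx
    have : e.symm x ∈ W.map e.symm.toLinearMap := ⟨x, hx, rfl⟩
    rw [h2, Submodule.mem_bot] at this
    have := congrArg e this
    simpa using this
  · rintro rfl; exact W.zero_mem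

theorem noSub_sub {X : Type u} [AddCommGroup X] [Module A X] (hU : IsTorsionClass A U)
    (S : Submodule A X) (h : NoSub U X) : NoSub U S := by
  intro W hW
  have h1 : ModuleCat.of A (W.map S.subtype) ∈ U := mem_map hU _ _ hW
  exact map_subtype_eq_bot (h _ h1)

theorem noSub_subset (h : U ⊆ V) {X : Type u} [AddCommGroup X] [Module A X]
    (hV : NoSub V X) : NoSub U X := fun S hS => hV S (h hS)

/-- A nonzero module in the torsion class generated by a union of torsion classes has a
nonzero submodule lying in one of them. -/
theorem exists_sub [IsNoetherianRing A] {𝒞 : Set (Set (ModuleCat.{u} A))}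
    (h𝒞 : ∀ U ∈ 𝒞, IsTorsionClass A U) {M : ModuleCat.{u} A} (hM : M ∈ torsGen A (⋃₀ 𝒞))
    (hnt : Nontrivial M) :
    ∃ U ∈ 𝒞, ∃ S : Submodule A M, S ≠ ⊥ ∧ ModuleCat.of A S ∈ U := by
  set J' : Set (ModuleCat.{u} A) :=
    {X | Module.Finite A X ∧ ∀ (N : ModuleCat.{u} A) (f : X →ₗ[A] N), Function.Surjective f →
      Nontrivial N → ∃ U ∈ 𝒞, ∃ S : Submodule A N, S ≠ ⊥ ∧ ModuleCat.of A S ∈ U} with hJ'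
  have hJtors : IsTorsionClass A J' := by
    refine ⟨fun X hX => hX.1, ?_, ?_, ?_, ?_⟩
    · refine fun X hX => ⟨?_, fun N f hf hnt => ?_⟩
      · exact Module.Finite.of_surjective (0 : (⊥ : Submodule A X) →ₗ[A] X)
          (fun x => ⟨0, (Subsingleton.elim _ x)⟩)
      · exfalso
        have : Subsingleton N := ⟨fun a b => by
          obtain ⟨a', rfl⟩ := hf a; obtain ⟨b', rfl⟩ := hf b
          rw [Subsingleton.elim a' b']⟩
        exact (not_subsingleton_iff_nontrivial.mpr hnt) this
    · rintro X Y hX ⟨e⟩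
      haveI : Module.Finite A X := hX.1
      refine ⟨Module.Finite.equiv (show X ≃ₗ[A] Y from e), fun N f hf hnt => ?_⟩
      exact hX.2 N (f.comp (e : X →ₗ[A] Y)) (hf.comp e.surjective) hnt
    · rintro X Y f hf hX
      haveI : Module.Finite A X := hX.1
      refine ⟨Module.Finite.of_surjective f hf, fun N g hg hnt => ?_⟩
      exact hX.2 N (g.comp f) (hg.comp hf) hnt
    · rintro X S h1 h2
      refine ⟨?_, fun N f hf hnt => ?_⟩
      · haveI : Module.Finite A S := h1.1
        haveI : Module.Finite A (X ⧸ S) := h2.1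
        haveI : IsNoetherian A S := isNoetherian_of_isNoetherianRing_of_finite A S
        haveI : IsNoetherian A (X ⧸ S) := isNoetherian_of_isNoetherianRing_of_finite A (X ⧸ S)
        haveI : IsNoetherian A X := (isNoetherian_iff_submodule_quotient S).mpr ⟨‹_›, ‹_›⟩
        show Module.Finite A X
        infer_instance
      · by_cases hr : LinearMap.range (f.comp S.subtype) = ⊥
        · -- f kills S, factors through X ⧸ S
          have hle : S ≤ LinearMap.ker f := by
            intro x hx
            have : f x = f.comp S.subtype ⟨x, hx⟩ := rfl
            rw [LinearMap.mem_ker, this]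
            have : f.comp S.subtype ⟨x, hx⟩ ∈ LinearMap.range (f.comp S.subtype) :=
              ⟨⟨x, hx⟩, rfl⟩
            rw [hr, Submodule.mem_bot] at this
            exact this
          have hsurj : Function.Surjective (S.liftQ f hle) := by
            intro y
            obtain ⟨x, rfl⟩ := hf y
            exact ⟨S.mkQ x, by simp⟩
          exact h2.2 N (S.liftQ f hle) hsurj hnt
        · -- the image of S in N is nonzero
          haveI : Nontrivial (LinearMap.range (f.comp S.subtype)) :=
            Submodule.nontrivial_iff_ne_bot.mpr hr
          obtain ⟨U, hU, S', hS'ne, hS'mem⟩ :=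
            h1.2 (ModuleCat.of A (LinearMap.range (f.comp S.subtype)))
              ((f.comp S.subtype).rangeRestrict) (LinearMap.surjective_rangeRestrict _) ‹_›
          refine ⟨U, hU, S'.map (LinearMap.range (f.comp S.subtype)).subtype, ?_, ?_⟩
          · intro hbot
            exact hS'ne (map_subtype_eq_bot hbot)
          · exact mem_map (h𝒞 U hU) _ _ hS'mem
  have hsub : ⋃₀ 𝒞 ⊆ J' := by
    rintro X ⟨U, hU, hXU⟩
    refine ⟨(h𝒞 U hU).1 X hXU, fun N f hf hnt => ?_⟩
    refine ⟨U, hU, ⊤, ?_, ?_⟩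
    · intro htop
      rcases exists_pair_ne N with ⟨a, b, hab⟩
      exact hab (by
        have ha : a ∈ (⊤ : Submodule A N) := trivial
        have hb : b ∈ (⊤ : Submodule A N) := trivial
        rw [htop, Submodule.mem_bot] at ha hb
        rw [ha, hb])
    · have hN : (N : ModuleCat.{u} A) ∈ U := (h𝒞 U hU).2.2.2.1 X N f hf hXU
      exact mem_iso (h𝒞 U hU) (Submodule.topEquiv (M := N)).symm hN
  have hMJ : M ∈ J' := torsGen_subset hJtors hsub hM
  exact hMJ.2 M LinearMap.id Function.surjective_id hnt

end TorsAux
end Helpers2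
section Helpers3
variable {A : Type u} [Ring A]
namespace TorsAux
variable {U T V : Set (ModuleCat.{u} A)}

/-- Every finitely generated module over a noetherian ring has a maximal `U`-torsion
submodule; its quotient has no nonzero `U`-submodule. -/
theorem exists_max_sub [IsNoetherianRing A] (hU : IsTorsionClass A U) (X : Type u)
    [AddCommGroup X] [Module A X] [Module.Finite A X] :
    ∃ t : Submodule A X, ModuleCat.of A t ∈ U ∧ NoSub U (X ⧸ t) := by
  haveI : IsNoetherian A X := isNoetherian_of_isNoetherianRing_of_finite A X
  have hset : {S : Submodule A X | ModuleCat.of A S ∈ U}.Nonempty := by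
    refine ⟨⊥, mem_zero hU _ ?_⟩
    exact ⟨fun a b => Subtype.ext (by
      have ha := a.2; have hb := b.2
      rw [Submodule.mem_bot] at ha hb
      rw [ha, hb])⟩
  obtain ⟨t, htmem, htmax⟩ :=
    (set_has_maximal_iff_noetherian.mpr ‹_›) {S : Submodule A X | ModuleCat.of A S ∈ U} hset
  refine ⟨t, htmem, fun W hW => ?_⟩
  by_contra hWne
  set S : Submodule A X := W.comap t.mkQ with hS
  have htle : t ≤ S := fun x hx => by
    show t.mkQ x ∈ W
    rw [Submodule.mkQ_apply, (Submodule.Quotient.mk_eq_zero t).mpr hx]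
    exact W.zero_mem
  have hmapS : S.map t.mkQ = W := by
    rw [hS, Submodule.map_comap_eq, Submodule.range_mkQ, top_inf_eq]
  have hSmem : ModuleCat.of A S ∈ U := by
    refine mem_ext hU (t.comap S.subtype) ?_ ?_
    · exact mem_comap_subtype hU htle htmem
    · -- (S ⧸ t') ≃ W
      set g : S →ₗ[A] X ⧸ t := t.mkQ.comp S.subtype with hg
      have hker : LinearMap.ker g = t.comap S.subtype := by
        rw [hg, LinearMap.ker_comp, Submodule.ker_mkQ]
      have hrange : LinearMap.range g = W := by
        rw [hg, LinearMap.range_comp, Submodule.range_subtype, hmapS]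
      have e1 : (S ⧸ t.comap S.subtype) ≃ₗ[A] LinearMap.range g :=
        (Submodule.quotEquivOfEq _ _ hker.symm).trans g.quotKerEquivRange
      have e2 : LinearMap.range g ≃ₗ[A] W := LinearEquiv.ofEq _ _ hrange
      exact mem_iso hU (e1.trans e2).symm hW
  have hlt : t < S := by
    refine lt_of_le_of_ne htle fun he => ?_
    apply hWne
    rw [← hmapS, ← he, eq_bot_iff]
    rintro x ⟨y, hy, rfl⟩
    rw [Submodule.mem_bot, Submodule.mkQ_apply, Submodule.Quotient.mk_eq_zero]
    exact hy
  exact htmax S hSmem hlt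

/-- If every proper quotient of `X` has a nonzero `U`-submodule, then `X ∈ U`. -/
theorem mem_of_quotients [IsNoetherianRing A] (hU : IsTorsionClass A U) (X : Type u)
    [AddCommGroup X] [Module A X] [Module.Finite A X]
    (h : ∀ K : Submodule A X, K ≠ ⊤ → ∃ W : Submodule A (X ⧸ K), W ≠ ⊥ ∧ ModuleCat.of A W ∈ U) :
    ModuleCat.of A X ∈ U := by
  obtain ⟨t, htmem, htno⟩ := exists_max_sub hU X
  by_cases ht : t = ⊤
  · subst ht
    exact mem_iso hU (Submodule.topEquiv (M := X)) htmem
  · obtain ⟨W, hWne, hWmem⟩ := h t ht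
    exact absurd (htno W hWmem) hWne

/-- If a module has no nonzero submodule in the common intersection of a family `𝒮` of
torsion classes, and is nontrivial, then for some `U ∈ 𝒮` it has a proper quotient with no
nonzero `U`-submodule. -/
theorem meet_key [IsNoetherianRing A] {𝒮 : Set (Set (ModuleCat.{u} A))}
    (h𝒮 : ∀ U ∈ 𝒮, IsTorsionClass A U) (X : Type u) [AddCommGroup X] [Module A X]
    [Module.Finite A X] (hnt : Nontrivial X) (hnosub : NoSub (⋂₀ 𝒮) X) :
    ∃ U ∈ 𝒮, ∃ K : Submodule A X, K ≠ ⊤ ∧ NoSub U (X ⧸ K) := by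
  by_contra hcon
  push_neg at hcon
  have hall : ∀ U ∈ 𝒮, ModuleCat.of A X ∈ U := by
    intro U hU
    refine mem_of_quotients (h𝒮 U hU) X fun K hK => ?_
    have h' := hcon U hU K hK
    simp only [NoSub] at h'
    push_neg at h'
    obtain ⟨W, hWmem, hWne⟩ := h'
    exact ⟨W, hWne, hWmem⟩
  have htopmem : ModuleCat.of A (⊤ : Submodule A X) ∈ ⋂₀ 𝒮 := by
    intro U hU
    exact mem_iso (h𝒮 U hU) (Submodule.topEquiv (M := X)).symm (hall U hU)
  have := hnosub ⊤ htopmem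
  rcases exists_pair_ne X with ⟨a, b, hab⟩
  apply hab
  have ha : a ∈ (⊤ : Submodule A X) := trivial
  have hb : b ∈ (⊤ : Submodule A X) := trivial
  rw [this, Submodule.mem_bot] at ha hb
  rw [ha, hb]

/-- If `X` has no nonzero `T`-submodule and no nonzero `U`-submodule, then it has no nonzero
submodule in `torsGen A (T ∪ U)`. -/
theorem noSub_join [IsNoetherianRing A] (hT : IsTorsionClass A T) (hU : IsTorsionClass A U)
    (X : Type u) [AddCommGroup X] [Module A X] (h1 : NoSub T X) (h2 : NoSub U X) :
    NoSub (torsGen A (T ∪ U)) X := by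
  intro S hS
  by_contra hSne
  haveI : Nontrivial S := Submodule.nontrivial_iff_ne_bot.mpr hSne
  have h𝒞 : ∀ W ∈ ({T, U} : Set (Set (ModuleCat.{u} A))), IsTorsionClass A W := by
    rintro W (rfl | rfl)
    exacts [hT, hU]
  have hS' : ModuleCat.of A S ∈ torsGen A (⋃₀ ({T, U} : Set (Set (ModuleCat.{u} A)))) := by
    rwa [Set.sUnion_pair]
  obtain ⟨W, hW, S', hS'ne, hS'mem⟩ := exists_sub h𝒞 hS' ‹_›
  have hmap : ModuleCat.of A (S'.map S.subtype) ∈ W := mem_map (h𝒞 W hW) _ _ hS'mem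
  have hbot : S'.map S.subtype = ⊥ := by
    rcases hW with rfl | rfl
    · exact h1 _ hmap
    · exact h2 _ hmap
  exact hS'ne (map_subtype_eq_bot hbot)

/-- A finitely generated module all of whose maps to `G`-torsionfree modules vanish
belongs to `G`. -/
theorem mem_of_hom_vanish [IsNoetherianRing A] {G : Set (ModuleCat.{u} A)}
    (hG : IsTorsionClass A G) (X : Type u) [AddCommGroup X] [Module A X] [Module.Finite A X]
    (h : ∀ (Y : Type u) [AddCommGroup Y] [Module A Y], Module.Finite A Y → NoSub G Y →
      ∀ f : X →ₗ[A] Y, f = 0) :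
    ModuleCat.of A X ∈ G := by
  obtain ⟨t, htmem, htno⟩ := exists_max_sub hG X
  haveI : Module.Finite A (X ⧸ t) := Module.Finite.of_surjective t.mkQ t.mkQ_surjective
  have hzero := h (X ⧸ t) ‹_› htno t.mkQ
  have ht : t = ⊤ := by
    rw [eq_top_iff]
    intro x _
    rw [← Submodule.Quotient.mk_eq_zero t, ← Submodule.mkQ_apply, hzero]
    rfl
  subst ht
  exact mem_iso hG (Submodule.topEquiv (M := X)) htmem

end TorsAux
end Helpers3
section Helpers4
variable {A : Type u} [Ring A]
namespace TorsAux
variable {T : Set (ModuleCat.{u} A)}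

theorem map_subtype_eq_self {X : Type u} [AddCommGroup X] [Module A X] {S : Submodule A X}
    {K : Submodule A S} (h : K.map S.subtype = S) : K = ⊤ := by
  rw [eq_top_iff]
  rintro ⟨x, hx⟩ _
  rw [← h] at hx
  obtain ⟨y, hy, hxy⟩ := hx
  have : y = ⟨x, by rw [← h]; exact ⟨y, hy, hxy⟩⟩ := Subtype.ext hxy
  rwa [← this]

/-- The key inductive claim for join-semidistributivity: a module with no nonzero
`T`-submodule and no nonzero `⋂₀ 𝒮`-submodule has no nonzero `U`-submodule for `U ∈ 𝒮`,
provided all the joins `T ∨ U`, `U ∈ 𝒮`, agree. -/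
theorem noSub_claim [IsNoetherianRing A] [IsArtinianRing A] (hT : IsTorsionClass A T)
    {𝒮 : Set (Set (ModuleCat.{u} A))} (h𝒮 : ∀ U ∈ 𝒮, IsTorsionClass A U)
    {Uj : Set (ModuleCat.{u} A)} (hUj : Uj ∈ 𝒮)
    (hyp : ∀ U ∈ 𝒮, ∀ V ∈ 𝒮, torsGen A (T ∪ U) = torsGen A (T ∪ V))
    (X : Type u) [AddCommGroup X] [Module A X] [Module.Finite A X]
    (hnT : NoSub T X) (hnD : NoSub (⋂₀ 𝒮) X) : NoSub Uj X := by
  have hD : IsTorsionClass A (⋂₀ 𝒮) := sInter_isTorsionClass h𝒮 ⟨Uj, hUj⟩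
  haveI : IsArtinian A X := isArtinian_of_fg_of_artinian' 
  haveI : IsNoetherian A X := isNoetherian_of_isNoetherianRing_of_finite A X
  have key : ∀ S : Submodule A X, NoSub T S → NoSub (⋂₀ 𝒮) S → NoSub Uj S := by
    have wf : WellFounded ((· < ·) : Submodule A X → Submodule A X → Prop) :=
      IsWellFounded.wf
    intro S
    induction S using wf.induction with
    | _ S IH =>
      intro hnTS hnDS
      rcases subsingleton_or_nontrivial S with hsub | hnt
      · intro W _
        rw [eq_bot_iff]
        intro x _
        rw [Submodule.mem_bot]
        exact Subsingleton.elim x 0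
      · haveI : Module.Finite A S := inferInstance
        obtain ⟨Ui, hUi, K, hKne, hKno⟩ := meet_key h𝒮 S hnt hnDS
        set K' : Submodule A X := K.map S.subtype with hK'
        have hK'lt : K' < S := by
          refine lt_of_le_of_ne (Submodule.map_subtype_le S K) fun he => hKne ?_
          exact map_subtype_eq_self he
        have e : K ≃ₗ[A] K' := Submodule.equivMapOfInjective S.subtype S.injective_subtype K
        have hnTK : NoSub T K := noSub_sub hT K hnTS
        have hnDK : NoSub (⋂₀ 𝒮) K := noSub_sub hD K hnDS
        have hnTK' : NoSub T K' := noSub_equiv hT e hnTK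
        have hnDK' : NoSub (⋂₀ 𝒮) K' := noSub_equiv hD e hnDK
        have hnUjK' : NoSub Uj K' := IH K' hK'lt hnTK' hnDK'
        have hnUjK : NoSub Uj K := noSub_equiv (h𝒮 Uj hUj) e.symm hnUjK'
        have hnEK : NoSub (torsGen A (T ∪ Uj)) K :=
          noSub_join hT (h𝒮 Uj hUj) K hnTK hnUjK
        have hnUiK : NoSub Ui K := by
          have h' : NoSub (torsGen A (T ∪ Ui)) K := by rw [hyp Ui hUi Uj hUj]; exact hnEK
          exact noSub_subset (Set.Subset.trans Set.subset_union_right subset_torsGen) h'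
        -- extension: S has no nonzero Ui-submodule
        have hnUiS : NoSub Ui S := by
          intro W hW
          have hW' : ModuleCat.of A (W.map K.mkQ) ∈ Ui := mem_map (h𝒮 Ui hUi) K.mkQ W hW
          have hWbot : W.map K.mkQ = ⊥ := hKno _ hW'
          have hWK : W ≤ K := by
            intro x hx
            have : K.mkQ x ∈ W.map K.mkQ := ⟨x, hx, rfl⟩
            rw [hWbot, Submodule.mem_bot] at this
            rwa [Submodule.mkQ_apply, Submodule.Quotient.mk_eq_zero] at this
          have hcm : ModuleCat.of A (W.comap K.subtype) ∈ Ui :=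
            mem_comap_subtype (h𝒮 Ui hUi) hWK hW
          have hcb : W.comap K.subtype = ⊥ := hnUiK _ hcm
          rw [eq_bot_iff]
          intro x hx
          have hmem : (⟨x, hWK hx⟩ : K) ∈ W.comap K.subtype := hx
          rw [hcb, Submodule.mem_bot] at hmem
          have : x = ((0 : K) : S) := congrArg Subtype.val hmem
          rw [Submodule.mem_bot]
          simpa using this
        have hnES : NoSub (torsGen A (T ∪ Uj)) S := by
          rw [← hyp Ui hUi Uj hUj]
          exact noSub_join hT (h𝒮 Ui hUi) S hnTS hnUiS
        exact noSub_subset (Set.Subset.trans Set.subset_union_right subset_torsGen) hnES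
  have htop := key ⊤ (noSub_equiv hT (Submodule.topEquiv (M := X)).symm hnT)
    (noSub_equiv hD (Submodule.topEquiv (M := X)).symm hnD)
  exact noSub_equiv (h𝒮 Uj hUj) (Submodule.topEquiv (M := X)) htop

end TorsAux
end Helpers4

open TorsAux

/-- The lattice of torsion classes of `mod A` is completely semidistributive:
(i) if `T ∩ U = T ∩ V` for all `U, V ∈ 𝒮`, then the smallest torsion class `J`
containing every member of `𝒮` satisfies `T ∩ J = T ∩ U` for every `U ∈ 𝒮`;
(ii) if `T ∨ U = T ∨ V` for all `U, V ∈ 𝒮`, then `T ∨ ⋂₀ 𝒮 = T ∨ U` for every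
`U ∈ 𝒮`, where `∨` denotes the smallest torsion class containing both classes. -/
theorem tors_completely_semidistributive (k A : Type u) [Field k] [Ring A] [Algebra k A]
    [FiniteDimensional k A]
    (T : Set (ModuleCat.{u} A)) (hT : IsTorsionClass A T)
    (𝒮 : Set (Set (ModuleCat.{u} A))) (h𝒮 : ∀ U ∈ 𝒮, IsTorsionClass A U) :
    ((∀ U ∈ 𝒮, ∀ V ∈ 𝒮, T ∩ U = T ∩ V) →
      ∀ U ∈ 𝒮, T ∩ torsGen A (⋃₀ 𝒮) = T ∩ U) ∧
    ((∀ U ∈ 𝒮, ∀ V ∈ 𝒮, torsGen A (T ∪ U) = torsGen A (T ∪ V)) →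
      ∀ U ∈ 𝒮, torsGen A (T ∪ ⋂₀ 𝒮) = torsGen A (T ∪ U)) := by
  haveI : IsNoetherian k A := isNoetherian_of_isNoetherianRing_of_finite k A
  haveI : IsNoetherianRing A := isNoetherian_of_tower k (inferInstance : IsNoetherian k A)
  haveI : IsArtinian k A := isArtinian_of_fg_of_artinian'
  haveI : IsArtinianRing A := isArtinian_of_tower k (inferInstance : IsArtinian k A)
  constructor
  · -- meet semidistributivity
    intro hyp Uj hUj
    apply Set.Subset.antisymm
    · rintro M ⟨hMT, hMJ⟩
      refine ⟨hMT, ?_⟩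
      haveI : Module.Finite A M := hT.1 M hMT
      haveI : IsNoetherian A M := isNoetherian_of_isNoetherianRing_of_finite A M
      have main : ∀ K : Submodule A M, ModuleCat.of A (M ⧸ K) ∈ T →
          ModuleCat.of A (M ⧸ K) ∈ torsGen A (⋃₀ 𝒮) → ModuleCat.of A (M ⧸ K) ∈ Uj := by
        intro K
        induction K using IsNoetherian.induction with
        | _ K IH =>
          intro hKT hKJ
          rcases subsingleton_or_nontrivial (M ⧸ K) with hsub | hnt
          · exact mem_zero (h𝒮 Uj hUj) _ hsub
          · obtain ⟨Ui, hUi, W, hWne, hWmem⟩ := exists_sub h𝒮 hKJ hnt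
            set K' : Submodule A M := W.comap K.mkQ with hK'def
            have hle : K ≤ K' := by
              intro x hx
              show K.mkQ x ∈ W
              rw [Submodule.mkQ_apply, (Submodule.Quotient.mk_eq_zero K).mpr hx]
              exact W.zero_mem
            have hmap : K'.map K.mkQ = W := by
              rw [hK'def, Submodule.map_comap_eq, Submodule.range_mkQ, top_inf_eq]
            have hlt : K < K' := by
              refine lt_of_le_of_ne hle fun he => hWne ?_
              rw [← hmap, ← he, eq_bot_iff]
              rintro x ⟨y, hy, rfl⟩
              rw [Submodule.mem_bot, Submodule.mkQ_apply, Submodule.Quotient.mk_eq_zero]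
              exact hy
            have hsurj : Function.Surjective (Submodule.mapQ K K' LinearMap.id hle) := by
              intro x
              obtain ⟨y, rfl⟩ := K'.mkQ_surjective x
              exact ⟨K.mkQ y, by simp [Submodule.mapQ_apply, Submodule.mkQ_apply]⟩
            have hK'T : ModuleCat.of A (M ⧸ K') ∈ T := mem_quot hT _ hsurj hKT
            have hK'J : ModuleCat.of A (M ⧸ K') ∈ torsGen A (⋃₀ 𝒮) :=
              mem_quot (torsGen_isTorsionClass fun X hX => by
                obtain ⟨U, hU, hXU⟩ := hX; exact (h𝒮 U hU).1 X hXU) _ hsurj hKJ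
            have hK'Uj : ModuleCat.of A (M ⧸ K') ∈ Uj := IH K' hlt hK'T hK'J
            have hK'Ui : ModuleCat.of A (M ⧸ K') ∈ Ui := by
              have hmem : ModuleCat.of A (M ⧸ K') ∈ T ∩ Uj := ⟨hK'T, hK'Uj⟩
              rw [hyp Uj hUj Ui hUi] at hmem
              exact hmem.2
            have equot : ((M ⧸ K) ⧸ W) ≃ₗ[A] (M ⧸ K') :=
              (Submodule.quotEquivOfEq W (K'.map K.mkQ) hmap.symm).trans
                (Submodule.quotientQuotientEquivQuotient K K' hle)
            have hKUi : ModuleCat.of A (M ⧸ K) ∈ Ui :=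
              mem_ext (h𝒮 Ui hUi) W hWmem (mem_iso (h𝒮 Ui hUi) equot.symm hK'Ui)
            have hmem : ModuleCat.of A (M ⧸ K) ∈ T ∩ Ui := ⟨hKT, hKUi⟩
            rw [← hyp Uj hUj Ui hUi] at hmem
            exact hmem.2
      have hbotT : ModuleCat.of A (M ⧸ (⊥ : Submodule A M)) ∈ T :=
        mem_iso hT (Submodule.quotEquivOfEqBot ⊥ rfl).symm hMT
      have hbotJ : ModuleCat.of A (M ⧸ (⊥ : Submodule A M)) ∈ torsGen A (⋃₀ 𝒮) :=
        mem_iso (torsGen_isTorsionClass fun X hX => by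
          obtain ⟨U, hU, hXU⟩ := hX; exact (h𝒮 U hU).1 X hXU)
          (Submodule.quotEquivOfEqBot ⊥ rfl).symm hMJ
      exact mem_iso (h𝒮 Uj hUj) (Submodule.quotEquivOfEqBot ⊥ rfl) (main ⊥ hbotT hbotJ)
    · rintro M ⟨hMT, hMU⟩
      exact ⟨hMT, subset_torsGen (Set.subset_sUnion_of_mem hUj hMU)⟩
  · -- join semidistributivity
    intro hyp Uj hUj
    have hUjt := h𝒮 Uj hUj
    have hDsub : ⋂₀ 𝒮 ⊆ Uj := Set.sInter_subset_of_mem hUj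
    have hfinG : ∀ M ∈ T ∪ ⋂₀ 𝒮, Module.Finite A M := by
      rintro M (hM | hM)
      · exact hT.1 M hM
      · exact hUjt.1 M (hDsub hM)
    have hfinE : ∀ M ∈ T ∪ Uj, Module.Finite A M := by
      rintro M (hM | hM)
      · exact hT.1 M hM
      · exact hUjt.1 M hM
    have hGt : IsTorsionClass A (torsGen A (T ∪ ⋂₀ 𝒮)) := torsGen_isTorsionClass hfinG
    have hEt : IsTorsionClass A (torsGen A (T ∪ Uj)) := torsGen_isTorsionClass hfinE
    have hTG : T ⊆ torsGen A (T ∪ ⋂₀ 𝒮) :=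
      Set.Subset.trans Set.subset_union_left subset_torsGen
    have hDG : ⋂₀ 𝒮 ⊆ torsGen A (T ∪ ⋂₀ 𝒮) :=
      Set.Subset.trans Set.subset_union_right subset_torsGen
    apply Set.Subset.antisymm
    · refine torsGen_subset hEt (Set.union_subset ?_ ?_)
      · exact Set.Subset.trans Set.subset_union_left subset_torsGen
      · exact Set.Subset.trans hDsub (Set.Subset.trans Set.subset_union_right subset_torsGen)
    · refine torsGen_subset hGt (Set.union_subset hTG ?_)
      intro M hM
      haveI : Module.Finite A M := hUjt.1 M hM
      show ModuleCat.of A M ∈ torsGen A (T ∪ ⋂₀ 𝒮)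
      apply mem_of_hom_vanish hGt
      intro Y _ _ hYfin hYno f
      haveI : Module.Finite A Y := hYfin
      have hnoT : NoSub T Y := noSub_subset hTG hYno
      have hnoD : NoSub (⋂₀ 𝒮) Y := noSub_subset hDG hYno
      have hnoUj : NoSub Uj Y := noSub_claim hT h𝒮 hUj hyp Y hnoT hnoD
      have hrange : ModuleCat.of A (LinearMap.range f) ∈ Uj :=
        mem_quot hUjt f.rangeRestrict (LinearMap.surjective_rangeRestrict f) hM
      have : LinearMap.range f = ⊥ := hnoUj _ hrange
      exact LinearMap.range_eq_bot.mp this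
end

section
/- Let k be a field and A a finite-dimensional k-algebra. (a) A torsion class T in mod A is compact in the complete lattice of torsion classes — meaning that whenever T is contained in the smallest torsion class containing the union of a family 𝒮 of torsion classes, there is a finite subfamily F ⊆ 𝒮 with T contained in the smallest torsion class containing the union of F — if and only if T = T(X), the smallest torsion class containing X, for some finitely generated A-module X. (b) A torsion class T is co-compact — meaning that whenever ⋂𝒮 ⊆ T for a family 𝒮 of torsion classes, there is a finite subfamily F ⊆ 𝒮 with ⋂F ⊆ T — if and only if T = ⊥X := { Y ∈ mod A | Hom_A(Y, X) = 0 } for some finitely generated A-module X. -/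
universe u

/-!
(a) The classes `T(⋃₀ F)` for finite `F ⊆ 𝒮` form a directed family whose union is a torsion
class, so a single module of `T(⋃₀ 𝒮)` already lies in one of them: `T(X)` is compact.
Conversely a compact `T` is covered by finitely many `T(Xᵢ)` with `Xᵢ ∈ T`, and then
`T = T(∏ Xᵢ)`.

(b) For finitely generated `Y`, the quotient of `Y` by its largest submodule in `T` admits no
nonzero map from `T`; hence `T` is the intersection of the classes `⊥X` with `Hom(T, X) = 0`,
co-compactness leaves finitely many such `Xᵢ`, and `T = ⊥(∏ Xᵢ)`. Conversely, given
`⋂₀ 𝒮 ⊆ ⊥X`, the largest submodules of `X` in `⋂₀ F`, for finite `F ⊆ 𝒮`, have a minimal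
member since `X` is Artinian. It lies in every member of `𝒮`, hence in `⊥X`, hence vanishes;
so every map from `⋂₀ F` to `X` is zero.
-/

section

variable {A : Type u} [Ring A]

namespace IsTorsionClass

variable {T : Set (ModuleCat.{u} A)} (hT : IsTorsionClass A T)
include hT

theorem finite {M : ModuleCat.{u} A} (hM : M ∈ T) : Module.Finite A M := hT.1 M hM

theorem mem_of_subsingleton (M : ModuleCat.{u} A) [Subsingleton M] : M ∈ T := hT.2.1 M ‹_›

theorem mem_of_equiv {M N : ModuleCat.{u} A} (e : M ≃ₗ[A] N) (hM : M ∈ T) : N ∈ T :=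
  hT.2.2.1 M N hM ⟨e⟩

theorem mem_of_surjective {M N : ModuleCat.{u} A} (f : M →ₗ[A] N) (hf : Function.Surjective f)
    (hM : M ∈ T) : N ∈ T :=
  hT.2.2.2.1 M N f hf hM

theorem mem_of_submodule_of_quotient {M : ModuleCat.{u} A} (S : Submodule A M)
    (hS : ModuleCat.of A S ∈ T) (hQ : ModuleCat.of A (M ⧸ S) ∈ T) : M ∈ T :=
  hT.2.2.2.2 M S hS hQ

theorem range_mem {M : ModuleCat.{u} A} {N : Type u} [AddCommGroup N] [Module A N]
    (f : M →ₗ[A] N) (hM : M ∈ T) : ModuleCat.of A (LinearMap.range f) ∈ T :=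
  hT.mem_of_surjective f.rangeRestrict f.surjective_rangeRestrict hM

theorem mem_of_ker_mem_of_range_mem {M : ModuleCat.{u} A} {N : Type u} [AddCommGroup N]
    [Module A N] (f : M →ₗ[A] N) (hker : ModuleCat.of A (LinearMap.ker f) ∈ T)
    (hrange : ModuleCat.of A (LinearMap.range f) ∈ T) : M ∈ T :=
  hT.mem_of_submodule_of_quotient _ hker (hT.mem_of_equiv f.quotKerEquivRange.symm hrange)

theorem prod_mem {M N : ModuleCat.{u} A} (hM : M ∈ T) (hN : N ∈ T) :
    ModuleCat.of A (M × N) ∈ T := by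
  refine hT.mem_of_ker_mem_of_range_mem (LinearMap.snd A M N) ?_ ?_
  · exact hT.mem_of_equiv ((LinearEquiv.ofInjective _ LinearMap.inl_injective).trans
      (LinearEquiv.ofEq _ _ (LinearMap.range_inl A M N))) hM
  · rw [LinearMap.range_eq_top.mpr Prod.snd_surjective]
    exact hT.mem_of_equiv Submodule.topEquiv.symm hN

theorem sup_mem {M : Type u} [AddCommGroup M] [Module A M] {S S' : Submodule A M}
    (hS : ModuleCat.of A S ∈ T) (hS' : ModuleCat.of A S' ∈ T) :
    ModuleCat.of A ↥(S ⊔ S') ∈ T := by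
  have := hT.range_mem (M := ModuleCat.of A (S × S')) (S.subtype.coprod S'.subtype)
    (hT.prod_mem hS hS')
  exact hT.mem_of_equiv (LinearEquiv.ofEq _ _ (Submodule.sup_eq_range S S').symm) this

end IsTorsionClass

theorem isTorsionClass_finite : IsTorsionClass A {M : ModuleCat.{u} A | Module.Finite A M} := by
  refine ⟨fun M hM => hM, fun M _ => ?_, fun M N (_ : Module.Finite A M) ⟨e⟩ => ?_,
    fun M N f hf (_ : Module.Finite A M) => ?_,
    fun M S (_ : Module.Finite A S) (_ : Module.Finite A (M ⧸ S)) => ?_⟩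
  · exact Module.Finite.of_surjective (0 : A →ₗ[A] M) fun m => ⟨0, Subsingleton.elim _ _⟩
  · exact Module.Finite.equiv e
  · exact Module.Finite.of_surjective f hf
  · exact Module.Finite.of_submodule_quotient S

theorem IsTorsionClass.sInter {𝒮 : Set (Set (ModuleCat.{u} A))}
    (h𝒮 : ∀ U ∈ 𝒮, IsTorsionClass A U) (hne : 𝒮.Nonempty) : IsTorsionClass A (⋂₀ 𝒮) := by
  obtain ⟨U₀, hU₀⟩ := hne
  exact ⟨fun M hM => (h𝒮 U₀ hU₀).finite (hM U₀ hU₀),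
    fun M (_ : Subsingleton M) U hU => (h𝒮 U hU).mem_of_subsingleton M,
    fun M N hM ⟨e⟩ U hU => (h𝒮 U hU).mem_of_equiv e (hM U hU),
    fun M N f hf hM U hU => (h𝒮 U hU).mem_of_surjective f hf (hM U hU),
    fun M S hS hQ U hU => (h𝒮 U hU).mem_of_submodule_of_quotient S (hS U hU) (hQ U hU)⟩

theorem IsTorsionClass.sUnion {𝒮 : Set (Set (ModuleCat.{u} A))}
    (h𝒮 : ∀ U ∈ 𝒮, IsTorsionClass A U) (hne : 𝒮.Nonempty) (hdir : DirectedOn (· ⊆ ·) 𝒮) :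
    IsTorsionClass A (⋃₀ 𝒮) := by
  obtain ⟨U₀, hU₀⟩ := hne
  refine ⟨fun M ⟨U, hU, hM⟩ => (h𝒮 U hU).finite hM,
    fun M (_ : Subsingleton M) => ⟨U₀, hU₀, (h𝒮 U₀ hU₀).mem_of_subsingleton M⟩,
    fun M N ⟨U, hU, hM⟩ ⟨e⟩ => ⟨U, hU, (h𝒮 U hU).mem_of_equiv e hM⟩,
    fun M N f hf ⟨U, hU, hM⟩ => ⟨U, hU, (h𝒮 U hU).mem_of_surjective f hf hM⟩,
    fun M S ⟨U, hU, hS⟩ ⟨V, hV, hQ⟩ => ?_⟩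
  obtain ⟨W, hW, hUW, hVW⟩ := hdir U hU V hV
  exact ⟨W, hW, (h𝒮 W hW).mem_of_submodule_of_quotient S (hUW hS) (hVW hQ)⟩

theorem subset_torsGen (C : Set (ModuleCat.{u} A)) : C ⊆ torsGen A C :=
  fun _ hM _ hU => hU.2 hM

theorem torsGen_subset {C U : Set (ModuleCat.{u} A)} (hU : IsTorsionClass A U) (h : C ⊆ U) :
    torsGen A C ⊆ U :=
  fun _ hM => hM U ⟨hU, h⟩

theorem torsGen_mono {C D : Set (ModuleCat.{u} A)} (h : C ⊆ D) : torsGen A C ⊆ torsGen A D :=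
  fun _ hM U hU => hM U ⟨hU.1, h.trans hU.2⟩

theorem isTorsionClass_torsGen {C : Set (ModuleCat.{u} A)} (hC : ∀ M ∈ C, Module.Finite A M) :
    IsTorsionClass A (torsGen A C) :=
  IsTorsionClass.sInter (fun _ hU => hU.1) ⟨_, isTorsionClass_finite, hC⟩

theorem isTorsionClass_torsGen_sUnion {𝒮 : Set (Set (ModuleCat.{u} A))}
    (h𝒮 : ∀ U ∈ 𝒮, IsTorsionClass A U) : IsTorsionClass A (torsGen A (⋃₀ 𝒮)) :=
  isTorsionClass_torsGen fun _ ⟨U, hU, hM⟩ => (h𝒮 U hU).finite hM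

theorem isTorsionClass_torsGen_singleton {X : ModuleCat.{u} A} (hX : Module.Finite A X) :
    IsTorsionClass A (torsGen A {X}) :=
  isTorsionClass_torsGen fun _ hM => hM ▸ hX

theorem exists_finite_of_mem_torsGen_sUnion {𝒮 : Set (Set (ModuleCat.{u} A))}
    (h𝒮 : ∀ U ∈ 𝒮, IsTorsionClass A U) {M : ModuleCat.{u} A} (hM : M ∈ torsGen A (⋃₀ 𝒮)) :
    ∃ F ⊆ 𝒮, F.Finite ∧ M ∈ torsGen A (⋃₀ F) := by
  set 𝒟 := (fun F => torsGen A (⋃₀ F)) '' {F | F ⊆ 𝒮 ∧ F.Finite}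
  have h𝒟 : IsTorsionClass A (⋃₀ 𝒟) := by
    refine IsTorsionClass.sUnion ?_ ⟨_, ∅, ⟨Set.empty_subset _, Set.finite_empty⟩, rfl⟩ ?_
    · rintro _ ⟨F, ⟨hF, -⟩, rfl⟩
      exact isTorsionClass_torsGen_sUnion fun U hU => h𝒮 U (hF hU)
    · refine directedOn_image.mpr fun F ⟨hF, hFfin⟩ G ⟨hG, hGfin⟩ => ?_
      exact ⟨F ∪ G, ⟨Set.union_subset hF hG, hFfin.union hGfin⟩,
        torsGen_mono (Set.sUnion_mono Set.subset_union_left),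
        torsGen_mono (Set.sUnion_mono Set.subset_union_right)⟩
  have h𝒮𝒟 : ⋃₀ 𝒮 ⊆ ⋃₀ 𝒟 := fun N ⟨U, hU, hN⟩ =>
    ⟨_, ⟨{U}, ⟨Set.singleton_subset_iff.mpr hU, Set.finite_singleton U⟩, rfl⟩,
      subset_torsGen _ (by simpa using hN)⟩
  obtain ⟨_, ⟨F, ⟨hF, hFfin⟩, rfl⟩, hMF⟩ := torsGen_subset h𝒟 h𝒮𝒟 hM
  exact ⟨F, hF, hFfin, hMF⟩

theorem exists_retract_of_finite {P G : Set (ModuleCat.{u} A)} (hP : P.Nonempty)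
    (hprod : ∀ X ∈ P, ∀ Y ∈ P, ModuleCat.of A (X × Y) ∈ P) (hG : G.Finite) (hGP : G ⊆ P) :
    ∃ X ∈ P, ∀ Y ∈ G, ∃ (i : Y →ₗ[A] X) (p : X →ₗ[A] Y), Function.LeftInverse p i := by
  induction G, hG using Set.Finite.induction_on with
  | empty => exact ⟨hP.some, hP.some_mem, by simp⟩
  | @insert Y G _ _ ih =>
    rw [Set.insert_subset_iff] at hGP
    obtain ⟨X, hX, hXG⟩ := ih hGP.2
    refine ⟨ModuleCat.of A (X × Y), hprod X hX Y hGP.1, ?_⟩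
    rintro Z (rfl | hZG)
    · exact ⟨LinearMap.inr A X Z, LinearMap.snd A X Z, fun _ => rfl⟩
    · obtain ⟨i, p, hpi⟩ := hXG Z hZG
      exact ⟨LinearMap.inl A X Y ∘ₗ i, p ∘ₗ LinearMap.fst A X Y, hpi⟩

-- `leftPerp X` is `⊥X` and `rightPerp T` is `T^⊥`.
def leftPerp (X : ModuleCat.{u} A) : Set (ModuleCat.{u} A) :=
  {Y | Module.Finite A Y ∧ ∀ f : Y →ₗ[A] X, f = 0}

def rightPerp (T : Set (ModuleCat.{u} A)) : Set (ModuleCat.{u} A) :=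
  {X | Module.Finite A X ∧ ∀ Y ∈ T, ∀ f : Y →ₗ[A] X, f = 0}

theorem isTorsionClass_leftPerp (X : ModuleCat.{u} A) : IsTorsionClass A (leftPerp X) := by
  have of_surjective (M N : ModuleCat.{u} A) (f : M →ₗ[A] N) (hf : Function.Surjective f)
      (hM : M ∈ leftPerp X) : N ∈ leftPerp X :=
    ⟨isTorsionClass_finite.mem_of_surjective f hf hM.1, fun g =>
      (LinearMap.cancel_right hf).mp (by rw [hM.2 (g ∘ₗ f), LinearMap.zero_comp])⟩
  refine ⟨fun M hM => hM.1, fun M _ => ?_,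
    fun M N hM ⟨e⟩ => of_surjective M N e e.surjective hM, of_surjective, fun M S hS hQ => ?_⟩
  · exact ⟨isTorsionClass_finite.mem_of_subsingleton M,
      fun f => LinearMap.ext fun y => by simp [Subsingleton.elim y 0]⟩
  · refine ⟨isTorsionClass_finite.mem_of_submodule_of_quotient S hS.1 hQ.1, fun f => ?_⟩
    have hSf : S ≤ LinearMap.ker f := fun x hx => by
      simpa using LinearMap.congr_fun (hS.2 (f ∘ₗ S.subtype)) ⟨x, hx⟩
    rw [← S.liftQ_mkQ f hSf, hQ.2 (S.liftQ f hSf), LinearMap.zero_comp]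

theorem leftPerp_subset_of_injective {X Y : ModuleCat.{u} A} (i : Y →ₗ[A] X)
    (hi : Function.Injective i) : leftPerp X ⊆ leftPerp Y := fun Z ⟨hZ, h⟩ =>
  ⟨hZ, fun f => LinearMap.ext fun z => hi (by simpa using LinearMap.congr_fun (h (i ∘ₗ f)) z)⟩

theorem eq_bot_of_mem_leftPerp {X : ModuleCat.{u} A} {S : Submodule A X}
    (hS : ModuleCat.of A S ∈ leftPerp X) : S = ⊥ := by
  simpa using congrArg LinearMap.range (hS.2 S.subtype)

theorem mem_rightPerp_of_subsingleton {T : Set (ModuleCat.{u} A)} (X : ModuleCat.{u} A)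
    [Subsingleton X] : X ∈ rightPerp T :=
  ⟨isTorsionClass_finite.mem_of_subsingleton X,
    fun _ _ _ => LinearMap.ext fun _ => Subsingleton.elim _ _⟩

theorem prod_mem_rightPerp {T : Set (ModuleCat.{u} A)} {X Y : ModuleCat.{u} A}
    (hX : X ∈ rightPerp T) (hY : Y ∈ rightPerp T) : ModuleCat.of A (X × Y) ∈ rightPerp T := by
  have := hX.1; have := hY.1
  exact ⟨Module.Finite.prod, fun Z hZ f => LinearMap.ext fun z => Prod.ext
    (LinearMap.congr_fun (hX.2 Z hZ (LinearMap.fst A X Y ∘ₗ f)) z)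
    (LinearMap.congr_fun (hY.2 Z hZ (LinearMap.snd A X Y ∘ₗ f)) z)⟩

theorem IsTorsionClass.subset_leftPerp {T : Set (ModuleCat.{u} A)} (hT : IsTorsionClass A T)
    {X : ModuleCat.{u} A} (hX : X ∈ rightPerp T) : T ⊆ leftPerp X :=
  fun Y hY => ⟨hT.finite hY, hX.2 Y hY⟩

section torsionPart

variable {U : Set (ModuleCat.{u} A)} {M : Type u} [AddCommGroup M] [Module A M]

variable (U M) in
/-- The torsion part `t_U(M)`, taken as a supremum so that it is defined for every class `U`. -/
def torsionPart : Submodule A M :=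
  sSup {S | ModuleCat.of A S ∈ U}

theorem le_torsionPart {S : Submodule A M} (hS : ModuleCat.of A S ∈ U) : S ≤ torsionPart U M :=
  le_sSup hS

theorem torsionPart_mono {V : Set (ModuleCat.{u} A)} (h : U ⊆ V) :
    torsionPart U M ≤ torsionPart V M :=
  sSup_le_sSup fun _ hS => h hS

theorem IsTorsionClass.torsionPart_mem (hU : IsTorsionClass A U) [IsNoetherian A M] :
    ModuleCat.of A (torsionPart U M) ∈ U :=
  CompleteLattice.WellFoundedGT.isSupClosedCompact (Submodule A M) inferInstance
    {S | ModuleCat.of A S ∈ U}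
    ⟨⊥, hU.mem_of_subsingleton (ModuleCat.of A (⊥ : Submodule A M))⟩
    fun _ hS _ hS' => hU.sup_mem hS hS'

theorem IsTorsionClass.quotient_torsionPart_mem_rightPerp (hU : IsTorsionClass A U)
    [IsNoetherian A M] : ModuleCat.of A (M ⧸ torsionPart U M) ∈ rightPerp U := by
  set t := torsionPart U M
  refine ⟨inferInstance, fun Z hZ g => ?_⟩
  -- the preimage `P` of `range g` is an extension of `t` by `range g`, so `P ≤ t`
  set P := (LinearMap.range g).comap t.mkQ
  have ht : t ≤ P := fun x hx => by
    simp [P, (Submodule.Quotient.mk_eq_zero t).mpr hx]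
  have hP : ModuleCat.of A P ∈ U := by
    refine hU.mem_of_ker_mem_of_range_mem (M := ModuleCat.of A P) (t.mkQ ∘ₗ P.subtype) ?_ ?_
    · rw [LinearMap.ker_comp, Submodule.ker_mkQ]
      exact hU.mem_of_equiv (Submodule.comapSubtypeEquivOfLe ht).symm hU.torsionPart_mem
    · rw [LinearMap.range_comp, Submodule.range_subtype,
        Submodule.map_comap_eq_of_surjective t.mkQ_surjective]
      exact hU.range_mem g hZ
  have hg : LinearMap.range g ≤ ⊥ := by
    rw [← Submodule.map_comap_eq_of_surjective t.mkQ_surjective (LinearMap.range g),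
      ← Submodule.mkQ_map_self t]
    exact Submodule.map_mono (le_torsionPart hP)
  exact LinearMap.range_eq_bot.mp (le_bot_iff.mp hg)

end torsionPart

theorem IsTorsionClass.sInter_leftPerp_rightPerp_subset [IsNoetherianRing A]
    {T : Set (ModuleCat.{u} A)} (hT : IsTorsionClass A T) :
    ⋂₀ (leftPerp '' rightPerp T) ⊆ T := by
  intro Y hY
  have : Module.Finite A Y :=
    (hY _ ⟨_, mem_rightPerp_of_subsingleton (ModuleCat.of A PUnit), rfl⟩).1
  have hYt := hY _ ⟨_, hT.quotient_torsionPart_mem_rightPerp (M := Y), rfl⟩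
  have htop : torsionPart T Y = ⊤ := by
    simpa using congrArg LinearMap.ker (hYt.2 (torsionPart T Y).mkQ)
  exact hT.mem_of_equiv ((LinearEquiv.ofEq _ _ htop).trans Submodule.topEquiv) hT.torsionPart_mem

theorem exists_finite_torsionPart_mem_sInter {𝒮 : Set (Set (ModuleCat.{u} A))}
    (h𝒮 : ∀ U ∈ 𝒮, IsTorsionClass A U) (M : Type u) [AddCommGroup M] [Module A M]
    [IsNoetherian A M] [IsArtinian A M] :
    ∃ F ⊆ 𝒮, F.Finite ∧ ModuleCat.of A (torsionPart (⋂₀ F) M) ∈ ⋂₀ 𝒮 := by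
  obtain ⟨_, ⟨F, ⟨hF, hFfin⟩, rfl⟩, hmin⟩ := IsArtinian.set_has_minimal
    ((fun F => torsionPart (⋂₀ F) M) '' {F | F ⊆ 𝒮 ∧ F.Finite})
    ⟨_, ∅, ⟨Set.empty_subset _, Set.finite_empty⟩, rfl⟩
  refine ⟨F, hF, hFfin, fun U hU => ?_⟩
  have hUF : IsTorsionClass A (⋂₀ insert U F) :=
    .sInter (fun V hV => h𝒮 V (Set.insert_subset hU hF hV)) ⟨U, Set.mem_insert U F⟩
  have hle : torsionPart (⋂₀ insert U F) M ≤ torsionPart (⋂₀ F) M :=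
    torsionPart_mono (Set.sInter_subset_sInter (Set.subset_insert U F))
  have heq := hle.eq_of_not_lt
    (hmin _ ⟨insert U F, ⟨Set.insert_subset hU hF, hFfin.insert U⟩, rfl⟩)
  exact heq ▸ hUF.torsionPart_mem U (Set.mem_insert U F)

variable (A) in
def IsCompactInTors (T : Set (ModuleCat.{u} A)) : Prop :=
  ∀ 𝒮 : Set (Set (ModuleCat.{u} A)), (∀ U ∈ 𝒮, IsTorsionClass A U) →
    T ⊆ torsGen A (⋃₀ 𝒮) → ∃ F ⊆ 𝒮, F.Finite ∧ T ⊆ torsGen A (⋃₀ F)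

variable (A) in
def IsCoCompactInTors (T : Set (ModuleCat.{u} A)) : Prop :=
  ∀ 𝒮 : Set (Set (ModuleCat.{u} A)), (∀ U ∈ 𝒮, IsTorsionClass A U) →
    ⋂₀ 𝒮 ⊆ T → ∃ F ⊆ 𝒮, F.Finite ∧ ⋂₀ F ⊆ T

theorem isCompactInTors_torsGen_singleton (X : ModuleCat.{u} A) :
    IsCompactInTors A (torsGen A {X}) := by
  intro 𝒮 h𝒮 hsub
  obtain ⟨F, hF, hFfin, hXF⟩ :=
    exists_finite_of_mem_torsGen_sUnion h𝒮 (hsub (subset_torsGen _ rfl))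
  exact ⟨F, hF, hFfin, torsGen_subset (isTorsionClass_torsGen_sUnion fun U hU => h𝒮 U (hF hU))
    (Set.singleton_subset_iff.mpr hXF)⟩

theorem IsCompactInTors.exists_eq_torsGen_singleton {T : Set (ModuleCat.{u} A)}
    (hc : IsCompactInTors A T) (hT : IsTorsionClass A T) :
    ∃ X : ModuleCat.{u} A, Module.Finite A X ∧ T = torsGen A {X} := by
  obtain ⟨F, hF, hFfin, hTF⟩ := hc ((fun X => torsGen A {X}) '' T)
    (by rintro _ ⟨X, hX, rfl⟩; exact isTorsionClass_torsGen_singleton (hT.finite hX))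
    (fun X hX => subset_torsGen _ ⟨_, ⟨X, hX, rfl⟩, subset_torsGen _ rfl⟩)
  obtain ⟨G, hGT, hGfin, rfl⟩ := Set.exists_subset_image_finite_and.mp ⟨F, hF, hFfin, rfl⟩
  obtain ⟨X, hXT, hXG⟩ := exists_retract_of_finite
    ⟨_, hT.mem_of_subsingleton (ModuleCat.of A PUnit)⟩ (fun _ hX _ hY => hT.prod_mem hX hY)
    hGfin hGT
  have hgen := isTorsionClass_torsGen_singleton (hT.finite hXT)
  refine ⟨X, hT.finite hXT, hTF.trans (torsGen_subset hgen ?_) |>.antisymm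
    (torsGen_subset hT (Set.singleton_subset_iff.mpr hXT))⟩
  rintro M ⟨_, ⟨Y, hYG, rfl⟩, hMY⟩
  obtain ⟨i, p, hpi⟩ := hXG Y hYG
  refine torsGen_subset hgen (Set.singleton_subset_iff.mpr ?_) hMY
  exact hgen.mem_of_surjective p hpi.surjective (subset_torsGen _ rfl)

theorem isCoCompactInTors_leftPerp [IsArtinianRing A] (X : ModuleCat.{u} A)
    [Module.Finite A X] : IsCoCompactInTors A (leftPerp X) := by
  intro 𝒮 h𝒮 hsub
  rcases 𝒮.eq_empty_or_nonempty with rfl | ⟨U₀, hU₀⟩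
  · exact ⟨∅, le_rfl, Set.finite_empty, hsub⟩
  obtain ⟨F, hF, hFfin, htF⟩ := exists_finite_torsionPart_mem_sInter h𝒮 X
  have ht : torsionPart (⋂₀ F) X = ⊥ := eq_bot_of_mem_leftPerp (hsub htF)
  refine ⟨insert U₀ F, Set.insert_subset hU₀ hF, hFfin.insert U₀, fun Y hY =>
    ⟨(h𝒮 U₀ hU₀).finite (hY U₀ (Set.mem_insert U₀ F)), fun f => ?_⟩⟩
  have hf : ModuleCat.of A (LinearMap.range f) ∈ ⋂₀ F := fun U hU =>
    (h𝒮 U (hF hU)).range_mem f (hY U (Set.mem_insert_of_mem U₀ hU))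
  exact LinearMap.range_eq_bot.mp (le_bot_iff.mp (ht ▸ le_torsionPart hf))

theorem IsCoCompactInTors.exists_eq_leftPerp [IsNoetherianRing A] {T : Set (ModuleCat.{u} A)}
    (hc : IsCoCompactInTors A T) (hT : IsTorsionClass A T) :
    ∃ X : ModuleCat.{u} A, Module.Finite A X ∧ T = leftPerp X := by
  obtain ⟨F, hF, hFfin, hFT⟩ := hc (leftPerp '' rightPerp T)
    (by rintro _ ⟨X, -, rfl⟩; exact isTorsionClass_leftPerp X) hT.sInter_leftPerp_rightPerp_subset
  obtain ⟨G, hG, hGfin, rfl⟩ := Set.exists_subset_image_finite_and.mp ⟨F, hF, hFfin, rfl⟩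
  obtain ⟨X, hX, hXG⟩ := exists_retract_of_finite
    ⟨_, mem_rightPerp_of_subsingleton (ModuleCat.of A PUnit)⟩
    (fun _ hX _ hY => prod_mem_rightPerp hX hY) hGfin hG
  refine ⟨X, hX.1, (hT.subset_leftPerp hX).antisymm fun Y hY => hFT ?_⟩
  rintro _ ⟨Z, hZG, rfl⟩
  obtain ⟨i, p, hpi⟩ := hXG Z hZG
  exact leftPerp_subset_of_injective i hpi.injective hY

end

/-- Characterization of compact and co-compact torsion classes:
(a) a torsion class `T` is compact in the lattice of torsion classes iff it is the
smallest torsion class `torsGen A {X}` generated by a single finitely generated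
module `X`;
(b) a torsion class `T` is co-compact iff it equals
`⊥X = { Y | Hom_A(Y, X) = 0 }` for some finitely generated module `X`. -/
theorem tors_compact_cocompact_characterization (k A : Type u) [Field k] [Ring A]
    [Algebra k A] [FiniteDimensional k A]
    (T : Set (ModuleCat.{u} A)) (hT : IsTorsionClass A T) :
    ((∀ 𝒮 : Set (Set (ModuleCat.{u} A)), (∀ U ∈ 𝒮, IsTorsionClass A U) →
        T ⊆ torsGen A (⋃₀ 𝒮) → ∃ F ⊆ 𝒮, F.Finite ∧ T ⊆ torsGen A (⋃₀ F)) ↔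
      ∃ X : ModuleCat.{u} A, Module.Finite A X ∧ T = torsGen A {X}) ∧
    ((∀ 𝒮 : Set (Set (ModuleCat.{u} A)), (∀ U ∈ 𝒮, IsTorsionClass A U) →
        ⋂₀ 𝒮 ⊆ T → ∃ F ⊆ 𝒮, F.Finite ∧ ⋂₀ F ⊆ T) ↔
      ∃ X : ModuleCat.{u} A, Module.Finite A X ∧
        T = {Y : ModuleCat.{u} A | Module.Finite A Y ∧ ∀ f : Y →ₗ[A] X, f = 0}) := by
  have : IsArtinianRing A := isArtinian_of_tower k inferInstance
  refine ⟨⟨fun hc => IsCompactInTors.exists_eq_torsGen_singleton hc hT, ?_⟩,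
    ⟨fun hc => IsCoCompactInTors.exists_eq_leftPerp hc hT, ?_⟩⟩
  · rintro ⟨X, -, rfl⟩
    exact isCompactInTors_torsGen_singleton X
  · rintro ⟨X, hX, rfl⟩
    exact isCoCompactInTors_leftPerp X
end

section
/- Let k be a field, A a finite-dimensional k-algebra, U a torsion class in mod A, and S a brick with Hom_A(U', S) = 0 for every U' ∈ U. Let T(U, S) denote the smallest torsion class containing U ∪ {S}. Then every A-module homomorphism f : X → S with X ∈ T(U, S) is either zero or surjective. -/
universe u

/-- Finiteness is closed under extensions. -/
lemma finite_of_submodule_quotient {A : Type u} [Ring A] (M : ModuleCat.{u} A)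
    (N : Submodule A M) (h1 : Module.Finite A N) (h2 : Module.Finite A (M ⧸ N)) :
    Module.Finite A M := by
  rw [Module.finite_def] at h1 h2 ⊢
  have hN : N.FG := by
    have := h1.map N.subtype
    rwa [Submodule.map_top, Submodule.range_subtype] at this
  have hQ : (⊤ : Submodule A M).map N.mkQ = ⊤ := by
    rw [Submodule.map_top, Submodule.range_mkQ]
  apply Submodule.fg_of_fg_map_of_fg_inf_ker N.mkQ
  · rw [hQ]; exact h2
  · rwa [top_inf_eq, Submodule.ker_mkQ]

/-- Let `U` be a torsion class and `S` a brick with `Hom_A(U', S) = 0` for all `U' ∈ U`.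
Then every homomorphism `f : X → S` with `X` in the smallest torsion class containing
`U ∪ {S}` is either zero or surjective. -/
theorem hom_to_brick_zero_or_surjective (k A : Type u) [Field k] [Ring A] [Algebra k A]
    [FiniteDimensional k A]
    (U : Set (ModuleCat.{u} A)) (hU : IsTorsionClass A U)
    (S : ModuleCat.{u} A) (hS : IsBrick A S)
    (hUS : ∀ U' ∈ U, ∀ f : U' →ₗ[A] S, f = 0) :
    ∀ X ∈ torsGen A (U ∪ {S}), ∀ f : X →ₗ[A] S, f = 0 ∨ Function.Surjective f := by
  set T : Set (ModuleCat.{u} A) :=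
    {X | Module.Finite A X ∧ ∀ f : X →ₗ[A] S, f = 0 ∨ Function.Surjective f} with hT
  have hTtors : IsTorsionClass A T := by
    refine ⟨fun M hM => hM.1, ?_, ?_, ?_, ?_⟩
    · intro M hM
      refine ⟨Module.Finite.of_surjective (0 : (⊤ : Submodule A M) →ₗ[A] M)
        (fun x => ⟨0, Subsingleton.elim _ _⟩), fun f => Or.inl ?_⟩
      ext x
      rw [Subsingleton.elim x 0, map_zero]; rfl
    · rintro M N ⟨hMf, hMh⟩ ⟨e⟩
      refine ⟨Module.Finite.of_surjective (e : M →ₗ[A] N) e.surjective, fun f => ?_⟩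
      rcases hMh (f.comp (e : M →ₗ[A] N)) with h | h
      · left
        ext x
        have := LinearMap.congr_fun h (e.symm x)
        simpa using this
      · right
        intro s
        obtain ⟨m, hm⟩ := h s
        exact ⟨e m, hm⟩
    · rintro M N f hf ⟨hMf, hMh⟩
      refine ⟨Module.Finite.of_surjective f hf, fun g => ?_⟩
      rcases hMh (g.comp f) with h | h
      · left
        ext n
        obtain ⟨m, rfl⟩ := hf n
        exact LinearMap.congr_fun h m
      · right
        rw [LinearMap.coe_comp] at h
        exact h.of_comp
    · rintro M N ⟨hNf, hNh⟩ ⟨hQf, hQh⟩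
      refine ⟨finite_of_submodule_quotient M N hNf hQf, fun f => ?_⟩
      rcases hNh (f.comp N.subtype) with h | h
      · -- f vanishes on N, factors through M ⧸ N
        have hle : N ≤ LinearMap.ker f := by
          intro x hx
          exact LinearMap.congr_fun h ⟨x, hx⟩
        rcases hQh (N.liftQ f hle) with h2 | h2
        · left
          ext m
          have := LinearMap.congr_fun h2 (N.mkQ m)
          simpa using this
        · right
          intro s
          obtain ⟨q, hq⟩ := h2 s
          obtain ⟨m, rfl⟩ := N.mkQ_surjective q
          exact ⟨m, hq⟩
      · right
        rw [LinearMap.coe_comp] at h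
        exact h.of_comp
  have hsub : U ∪ {S} ⊆ T := by
    rintro X (hX | hX)
    · exact ⟨hU.1 X hX, fun f => Or.inl (hUS X hX f)⟩
    · rw [Set.mem_singleton_iff] at hX
      subst hX
      refine ⟨hS.2.1, fun f => ?_⟩
      by_cases hf : f = 0
      · exact Or.inl hf
      · exact Or.inr (hS.2.2 f hf).2
  intro X hX
  exact (hX T ⟨hTtors, hsub⟩).2
end

section
/- Let k be a field and A a finite-dimensional k-algebra. Call an equivalence relation ≈ on the set of torsion classes of mod A a lattice congruence if T₁ ≈ U₁ and T₂ ≈ U₂ imply T₁ ∩ T₂ ≈ U₁ ∩ U₂ and T₁ ∨ T₂ ≈ U₁ ∨ U₂ (where ∨ denotes the smallest torsion class containing both). Suppose U₁ ⋖ T₁ and U₂ ⋖ T₂ are covering pairs of torsion classes, and let S₁ be a brick with S₁ ∈ T₁ and Hom_A(U', S₁) = 0 for all U' ∈ U₁, and S₂ a brick with S₂ ∈ T₂ and Hom_A(U', S₂) = 0 for all U' ∈ U₂. Then S₁ ≅ S₂ if and only if for every lattice congruence ≈ one has: T₁ ≈ U₁ ⟺ T₂ ≈ U₂. -/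
universe u

def IsLatticeCongruence (A : Type u) [Ring A]
    (r : Set (ModuleCat.{u} A) → Set (ModuleCat.{u} A) → Prop) : Prop :=
  Equivalence r ∧
  ∀ T₁ U₁ T₂ U₂ : Set (ModuleCat.{u} A),
    IsTorsionClass A T₁ → IsTorsionClass A U₁ → IsTorsionClass A T₂ →
    IsTorsionClass A U₂ → r T₁ U₁ → r T₂ U₂ →
    r (T₁ ∩ T₂) (U₁ ∩ U₂) ∧ r (torsGen A (T₁ ∪ T₂)) (torsGen A (U₁ ∪ U₂))

namespace BrickForcing

variable {A : Type u} [Ring A]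

/-- A subsingleton module is finite. -/
lemma finite_of_subsingleton (M : ModuleCat.{u} A) (h : Subsingleton M) :
    Module.Finite A M := by
  refine Module.finite_def.mpr ⟨∅, ?_⟩
  ext x
  simp only [Finset.coe_empty, Submodule.span_empty, Submodule.mem_bot, Submodule.mem_top,
    iff_true]
  exact Subsingleton.elim x 0

/-- Extension of finite by finite is finite. -/
lemma finite_ext (M : ModuleCat.{u} A) (X : Submodule A M)
    (h1 : Module.Finite A X) (h2 : Module.Finite A (M ⧸ X)) : Module.Finite A M := by
  rw [Module.finite_def]
  apply Submodule.fg_of_fg_map_of_fg_inf_ker X.mkQ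
  · rw [Submodule.map_top, Submodule.range_mkQ]
    exact Module.finite_def.mp h2
  · rw [top_inf_eq, Submodule.ker_mkQ]
    exact (Submodule.fg_top X).mp (Module.finite_def.mp h1)

lemma id_ne_zero {S : ModuleCat.{u} A} (h : Nontrivial S) :
    (LinearMap.id : S →ₗ[A] S) ≠ 0 := by
  intro h0
  obtain ⟨x, y, hxy⟩ := h.exists_pair_ne
  have hx := DFunLike.congr_fun h0 x
  have hy := DFunLike.congr_fun h0 y
  simp only [LinearMap.id_apply, LinearMap.zero_apply] at hx hy
  exact hxy (hx.trans hy.symm)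

/-- Intersection of torsion classes. -/
lemma isTorsionClass_inter {T U : Set (ModuleCat.{u} A)}
    (hT : IsTorsionClass A T) (hU : IsTorsionClass A U) : IsTorsionClass A (T ∩ U) := by
  refine ⟨fun M hM => hT.1 M hM.1, fun M h => ⟨hT.2.1 M h, hU.2.1 M h⟩, ?_, ?_, ?_⟩
  · intro M N hM he
    exact ⟨hT.2.2.1 M N hM.1 he, hU.2.2.1 M N hM.2 he⟩
  · intro M N f hf hM
    exact ⟨hT.2.2.2.1 M N f hf hM.1, hU.2.2.2.1 M N f hf hM.2⟩
  · intro M X h1 h2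
    exact ⟨hT.2.2.2.2 M X h1.1 h2.1, hU.2.2.2.2 M X h1.2 h2.2⟩

lemma subset_torsGen {C : Set (ModuleCat.{u} A)} : C ⊆ torsGen A C := by
  intro x hx
  exact Set.mem_sInter.mpr fun T hT => hT.2 hx

lemma torsGen_subset {C T : Set (ModuleCat.{u} A)} (hT : IsTorsionClass A T) (hC : C ⊆ T) :
    torsGen A C ⊆ T :=
  Set.sInter_subset_of_mem ⟨hT, hC⟩

lemma isTorsionClass_torsGen {C : Set (ModuleCat.{u} A)}
    (h : ∃ T, IsTorsionClass A T ∧ C ⊆ T) : IsTorsionClass A (torsGen A C) := by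
  obtain ⟨T₀, hT₀, hCT₀⟩ := h
  refine ⟨?_, ?_, ?_, ?_, ?_⟩
  · intro M hM
    exact hT₀.1 M (Set.mem_sInter.mp hM _ ⟨hT₀, hCT₀⟩)
  · intro M h
    exact Set.mem_sInter.mpr fun T hT => hT.1.2.1 M h
  · intro M N hM he
    exact Set.mem_sInter.mpr fun T hT => hT.1.2.2.1 M N (Set.mem_sInter.mp hM _ hT) he
  · intro M N f hf hM
    exact Set.mem_sInter.mpr fun T hT => hT.1.2.2.2.1 M N f hf (Set.mem_sInter.mp hM _ hT)
  · intro M X h1 h2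
    exact Set.mem_sInter.mpr fun T hT =>
      hT.1.2.2.2.2 M X (Set.mem_sInter.mp h1 _ hT) (Set.mem_sInter.mp h2 _ hT)

/-- The torsion class of finite modules with no nonzero map to `S`. -/
def Perp (S : ModuleCat.{u} A) : Set (ModuleCat.{u} A) :=
  {M | Module.Finite A M ∧ ∀ f : M →ₗ[A] S, f = 0}

lemma isTorsionClass_perp (S : ModuleCat.{u} A) : IsTorsionClass A (Perp S) := by
  refine ⟨fun M hM => hM.1, ?_, ?_, ?_, ?_⟩
  · intro M h
    refine ⟨finite_of_subsingleton M h, fun f => ?_⟩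
    ext x
    rw [Subsingleton.elim x 0]
    simp
  · rintro M N ⟨hfin, hv⟩ ⟨e⟩
    refine ⟨Module.Finite.equiv e, fun f => ?_⟩
    have h0 := hv (f.comp e.toLinearMap)
    ext n
    have := DFunLike.congr_fun h0 (e.symm n)
    simpa using this
  · rintro M N f hf ⟨hfin, hv⟩
    refine ⟨Module.Finite.of_surjective f hf, fun g => ?_⟩
    have h0 := hv (g.comp f)
    ext n
    obtain ⟨m, rfl⟩ := hf n
    have := DFunLike.congr_fun h0 m
    simpa using this
  · rintro M X ⟨hfin1, hv1⟩ ⟨hfin2, hv2⟩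
    refine ⟨finite_ext M X hfin1 hfin2, fun f => ?_⟩
    have hres : ∀ x ∈ X, f x = 0 := by
      intro x hx
      have := DFunLike.congr_fun (hv1 (f.comp X.subtype)) ⟨x, hx⟩
      simpa using this
    have h0 := hv2 (X.liftQ f hres)
    ext m
    have : X.liftQ f hres (Submodule.Quotient.mk m) = f m := Submodule.liftQ_apply X f m
    rw [← this, h0]
    simp

end BrickForcing
namespace BrickForcing

variable {A : Type u} [Ring A]

/-- Classes closed under the building blocks of filtrations. -/
def Closed (C D : Set (ModuleCat.{u} A)) : Prop :=
  C ⊆ D ∧ (∀ M : ModuleCat.{u} A, Subsingleton M → M ∈ D) ∧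
  (∀ M N : ModuleCat.{u} A, M ∈ D → Nonempty (M ≃ₗ[A] N) → N ∈ D) ∧
  (∀ (M : ModuleCat.{u} A) (X : Submodule A M),
     ModuleCat.of A X ∈ D → ModuleCat.of A (M ⧸ X) ∈ D → M ∈ D)

/-- The filtration closure of a class of modules. -/
def FiltCl (C : Set (ModuleCat.{u} A)) : Set (ModuleCat.{u} A) :=
  ⋂₀ {D | Closed C D}

lemma closed_filtCl (C : Set (ModuleCat.{u} A)) : Closed C (FiltCl C) := by
  refine ⟨?_, ?_, ?_, ?_⟩
  · intro x hx
    exact Set.mem_sInter.mpr fun D hD => hD.1 hx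
  · intro M h
    exact Set.mem_sInter.mpr fun D hD => hD.2.1 M h
  · intro M N hM he
    exact Set.mem_sInter.mpr fun D hD => hD.2.2.1 M N (Set.mem_sInter.mp hM _ hD) he
  · intro M X h1 h2
    exact Set.mem_sInter.mpr fun D hD =>
      hD.2.2.2 M X (Set.mem_sInter.mp h1 _ hD) (Set.mem_sInter.mp h2 _ hD)

lemma filtCl_subset {C D : Set (ModuleCat.{u} A)} (hD : Closed C D) : FiltCl C ⊆ D :=
  Set.sInter_subset_of_mem hD

/-- Closure under images of surjections. -/
def SurjClosed (C : Set (ModuleCat.{u} A)) : Prop :=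
  ∀ (M N : ModuleCat.{u} A) (f : M →ₗ[A] N), Function.Surjective f → M ∈ C → N ∈ C

lemma isTorsionClass_filtCl {C : Set (ModuleCat.{u} A)}
    (hfin : ∀ M ∈ C, Module.Finite A M) (hsc : SurjClosed C) :
    IsTorsionClass A (FiltCl C) := by
  have hFin : FiltCl C ⊆ {M : ModuleCat.{u} A | Module.Finite A M} := by
    apply filtCl_subset
    refine ⟨hfin, finite_of_subsingleton, ?_, ?_⟩
    · rintro M N hM ⟨e⟩
      haveI : Module.Finite A M := hM
      exact Module.Finite.equiv e
    · intro M X h1 h2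
      exact finite_ext M X h1 h2
  have hSurj : FiltCl C ⊆ {M : ModuleCat.{u} A |
      ∀ (N : ModuleCat.{u} A) (f : M →ₗ[A] N), Function.Surjective f → N ∈ FiltCl C} := by
    apply filtCl_subset
    refine ⟨?_, ?_, ?_, ?_⟩
    · intro M hM N f hf
      exact (closed_filtCl C).1 (hsc M N f hf hM)
    · intro M hMs N f hf
      exact (closed_filtCl C).2.1 N (Function.Surjective.subsingleton hf)
    · rintro M N hM ⟨e⟩ P f hf
      exact hM P (f.comp e.toLinearMap) (hf.comp e.surjective)
    · intro M X h1 h2 N f hf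
      have hX'1 : ModuleCat.of A (X.map f) ∈ FiltCl C := by
        apply h1 (ModuleCat.of A (X.map f))
          (f.restrict (p := X) (q := X.map f) fun x hx => Submodule.mem_map_of_mem hx)
        rintro ⟨y, hy⟩
        obtain ⟨x, hx, rfl⟩ := hy
        exact ⟨⟨x, hx⟩, rfl⟩
      have hQ : ModuleCat.of A (N ⧸ X.map f) ∈ FiltCl C := by
        apply h2 (ModuleCat.of A (N ⧸ X.map f))
          (Submodule.mapQ X (X.map f) f fun x hx =>
            Submodule.mem_comap.mpr (Submodule.mem_map_of_mem hx))
        intro y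
        obtain ⟨n, rfl⟩ := Submodule.mkQ_surjective (X.map f) y
        obtain ⟨m, rfl⟩ := hf n
        exact ⟨Submodule.Quotient.mk m, by erw [Submodule.mapQ_apply]⟩
      exact (closed_filtCl C).2.2.2 N (X.map f) hX'1 hQ
  refine ⟨fun M hM => hFin hM, (closed_filtCl C).2.1, (closed_filtCl C).2.2.1, ?_,
    (closed_filtCl C).2.2.2⟩
  intro M N f hf hM
  exact hSurj hM N f hf

lemma torsGen_eq_filtCl {C : Set (ModuleCat.{u} A)}
    (hfin : ∀ M ∈ C, Module.Finite A M) (hsc : SurjClosed C) :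
    torsGen A C = FiltCl C := by
  apply subset_antisymm
  · exact torsGen_subset (isTorsionClass_filtCl hfin hsc) (closed_filtCl C).1
  · intro x hx
    refine Set.mem_sInter.mpr fun T hT => ?_
    exact filtCl_subset ⟨hT.2, hT.1.2.1, hT.1.2.2.1, hT.1.2.2.2.2⟩ hx

/-- The class of quotients of a module. -/
def QuotCl (S : ModuleCat.{u} A) : Set (ModuleCat.{u} A) :=
  {N | ∃ g : S →ₗ[A] N, Function.Surjective g}

lemma self_mem_quotCl (S : ModuleCat.{u} A) : S ∈ QuotCl S :=
  ⟨LinearMap.id, Function.surjective_id⟩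

lemma surjClosed_quotCl (S : ModuleCat.{u} A) : SurjClosed (QuotCl S) := by
  rintro M N f hf ⟨g, hg⟩
  exact ⟨f.comp g, hf.comp hg⟩

lemma fin_quotCl {S : ModuleCat.{u} A} (h : Module.Finite A S) :
    ∀ M ∈ QuotCl S, Module.Finite A M := by
  rintro M ⟨g, hg⟩
  exact Module.Finite.of_surjective g hg

lemma torsGen_singleton_eq {S : ModuleCat.{u} A} (h : Module.Finite A S) :
    torsGen A {S} = FiltCl (QuotCl S) := by
  apply subset_antisymm
  · apply torsGen_subset (isTorsionClass_filtCl (fin_quotCl h) (surjClosed_quotCl S))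
    exact Set.singleton_subset_iff.mpr ((closed_filtCl _).1 (self_mem_quotCl S))
  · intro x hx
    refine Set.mem_sInter.mpr fun T hT => ?_
    refine filtCl_subset ⟨?_, hT.1.2.1, hT.1.2.2.1, hT.1.2.2.2.2⟩ hx
    rintro N ⟨g, hg⟩
    exact hT.1.2.2.2.1 S N g hg (hT.2 rfl)

end BrickForcing
namespace BrickForcing

variable {A : Type u} [Ring A]

/-- Classes closed under submodules and quotients. -/
def SubquotClosed (D : Set (ModuleCat.{u} A)) : Prop :=
  (∀ M ∈ D, ∀ X : Submodule A M, ModuleCat.of A X ∈ D) ∧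
  (∀ M ∈ D, ∀ (N : ModuleCat.{u} A) (f : M →ₗ[A] N), Function.Surjective f → N ∈ D)

/-- The class of subquotients of a fixed module. -/
def Sq (N₀ : ModuleCat.{u} A) : Set (ModuleCat.{u} A) :=
  {M | ∃ (L : ModuleCat.{u} A) (f : L →ₗ[A] N₀) (g : L →ₗ[A] M),
    Function.Injective f ∧ Function.Surjective g}

lemma self_mem_sq (N₀ : ModuleCat.{u} A) : N₀ ∈ Sq N₀ :=
  ⟨N₀, LinearMap.id, LinearMap.id, fun _ _ h => h, Function.surjective_id⟩

lemma subquotClosed_sq (N₀ : ModuleCat.{u} A) : SubquotClosed (Sq N₀) := by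
  constructor
  · rintro M ⟨L, f, g, hf, hg⟩ X
    refine ⟨ModuleCat.of A (X.comap g), f.comp (X.comap g).subtype,
      g.restrict (p := X.comap g) (q := X) fun x hx => hx, ?_, ?_⟩
    · exact hf.comp (Submodule.injective_subtype _)
    · rintro ⟨y, hy⟩
      obtain ⟨x, rfl⟩ := hg y
      exact ⟨⟨x, hy⟩, rfl⟩
  · rintro M ⟨L, f, g, hf, hg⟩ N p hp
    exact ⟨L, f, p.comp g, hf, hp.comp hg⟩

/-- Key lemma: filtration closures interact well with subquotient-closed classes. -/
lemma filtCl_inter_subset {X Y X' Y' D : Set (ModuleCat.{u} A)}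
    (hD : SubquotClosed D) (hX : X ∩ D ⊆ X') (hY : Y ∩ D ⊆ Y') :
    FiltCl (X ∪ Y) ∩ D ⊆ FiltCl (X' ∪ Y') := by
  intro M hM
  have key : FiltCl (X ∪ Y) ⊆ {M | M ∈ D → M ∈ FiltCl (X' ∪ Y')} := by
    apply filtCl_subset
    refine ⟨?_, ?_, ?_, ?_⟩
    · rintro M (hMX | hMY) hMD
      · exact (closed_filtCl _).1 (Or.inl (hX ⟨hMX, hMD⟩))
      · exact (closed_filtCl _).1 (Or.inr (hY ⟨hMY, hMD⟩))
    · intro M h _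
      exact (closed_filtCl _).2.1 M h
    · rintro M N hM ⟨e⟩ hND
      have hMD : M ∈ D := hD.2 N hND M e.symm.toLinearMap e.symm.surjective
      exact (closed_filtCl _).2.2.1 M N (hM hMD) ⟨e⟩
    · intro M X₀ h1 h2 hMD
      exact (closed_filtCl _).2.2.2 M X₀ (h1 (hD.1 M hMD X₀))
        (h2 (hD.2 M hMD _ X₀.mkQ (Submodule.mkQ_surjective X₀)))
  exact key hM.1 hM.2

/-- The congruence attached to a subquotient-closed class. -/
lemma isLatticeCongruence_interD {D : Set (ModuleCat.{u} A)} (hD : SubquotClosed D) :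
    IsLatticeCongruence A (fun X Y => X ∩ D = Y ∩ D) := by
  refine ⟨⟨fun _ => rfl, Eq.symm, Eq.trans⟩, ?_⟩
  intro T1 U1 T2 U2 hT1 hU1 hT2 hU2 h1 h2
  have hfinT : ∀ M ∈ T1 ∪ T2, Module.Finite A M := by
    rintro M (hM | hM)
    exacts [hT1.1 M hM, hT2.1 M hM]
  have hfinU : ∀ M ∈ U1 ∪ U2, Module.Finite A M := by
    rintro M (hM | hM)
    exacts [hU1.1 M hM, hU2.1 M hM]
  have hscT : SurjClosed (T1 ∪ T2) := by
    rintro M N f hf (hM | hM)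
    exacts [Or.inl (hT1.2.2.2.1 M N f hf hM), Or.inr (hT2.2.2.2.1 M N f hf hM)]
  have hscU : SurjClosed (U1 ∪ U2) := by
    rintro M N f hf (hM | hM)
    exacts [Or.inl (hU1.2.2.2.1 M N f hf hM), Or.inr (hU2.2.2.2.1 M N f hf hM)]
  constructor
  · apply Set.ext
    intro x
    have e1 := Set.ext_iff.mp h1 x
    have e2 := Set.ext_iff.mp h2 x
    simp only [Set.mem_inter_iff] at e1 e2 ⊢
    tauto
  · rw [torsGen_eq_filtCl hfinT hscT, torsGen_eq_filtCl hfinU hscU]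
    apply subset_antisymm
    · intro x hx
      refine ⟨filtCl_inter_subset hD ?_ ?_ hx, hx.2⟩
      · rw [h1]; exact Set.inter_subset_left
      · rw [h2]; exact Set.inter_subset_left
    · intro x hx
      refine ⟨filtCl_inter_subset hD ?_ ?_ hx, hx.2⟩
      · rw [← h1]; exact Set.inter_subset_left
      · rw [← h2]; exact Set.inter_subset_left

end BrickForcing
namespace BrickForcing

variable {A : Type u} [Ring A]

lemma brick_not_perp {S : ModuleCat.{u} A} (hb : IsBrick A S) : S ∉ Perp S := by
  intro h
  exact id_ne_zero hb.1 (h.2 LinearMap.id)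

lemma brick_not_mem {S : ModuleCat.{u} A} {U : Set (ModuleCat.{u} A)} (hb : IsBrick A S)
    (hv : ∀ U' ∈ U, ∀ f : U' →ₗ[A] S, f = 0) : S ∉ U := by
  intro h
  exact id_ne_zero hb.1 (hv S h LinearMap.id)

section Cover

variable {T U : Set (ModuleCat.{u} A)} {S : ModuleCat.{u} A}

/-- For a covering pair with brick label `S`, the lower class is `T ∩ Perp S`. -/
lemma lower_eq_inter_perp (hT : IsTorsionClass A T) (hU : IsTorsionClass A U)
    (hcov : U ⊂ T ∧ ∀ V : Set (ModuleCat.{u} A), IsTorsionClass A V →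
      U ⊆ V → V ⊆ T → V = U ∨ V = T)
    (hb : IsBrick A S) (hmem : S ∈ T) (hv : ∀ U' ∈ U, ∀ f : U' →ₗ[A] S, f = 0) :
    U = T ∩ Perp S := by
  have hsub : U ⊆ T ∩ Perp S := fun M hM =>
    ⟨hcov.1.subset hM, hU.1 M hM, hv M hM⟩
  rcases hcov.2 (T ∩ Perp S) (isTorsionClass_inter hT (isTorsionClass_perp S)) hsub
      Set.inter_subset_left with h | h
  · exact h.symm
  · exfalso
    have : S ∈ T ∩ Perp S := h.symm ▸ hmem
    exact brick_not_perp hb this.2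

/-- Reduction of the contraction of a covering pair to the canonical pair of its brick. -/
lemma reduction {r : Set (ModuleCat.{u} A) → Set (ModuleCat.{u} A) → Prop}
    (hr : IsLatticeCongruence A r)
    (hT : IsTorsionClass A T) (hU : IsTorsionClass A U)
    (hcov : U ⊂ T ∧ ∀ V : Set (ModuleCat.{u} A), IsTorsionClass A V →
      U ⊆ V → V ⊆ T → V = U ∨ V = T)
    (hb : IsBrick A S) (hmem : S ∈ T) (hv : ∀ U' ∈ U, ∀ f : U' →ₗ[A] S, f = 0) :
    r T U ↔ r (torsGen A {S}) (torsGen A {S} ∩ Perp S) := by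
  set 𝒯 : Set (ModuleCat.{u} A) := torsGen A {S} with h𝒯def
  have hST : ({S} : Set (ModuleCat.{u} A)) ⊆ T := Set.singleton_subset_iff.mpr hmem
  have h𝒯 : IsTorsionClass A 𝒯 := isTorsionClass_torsGen ⟨T, hT, hST⟩
  have h𝒯T : 𝒯 ⊆ T := torsGen_subset hT hST
  have hB : IsTorsionClass A (𝒯 ∩ Perp S) := isTorsionClass_inter h𝒯 (isTorsionClass_perp S)
  have hUeq : U = T ∩ Perp S := lower_eq_inter_perp hT hU hcov hb hmem hv
  have hBU : 𝒯 ∩ Perp S ⊆ U := by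
    rw [hUeq]
    exact fun x hx => ⟨h𝒯T hx.1, hx.2⟩
  have hSU : S ∉ U := brick_not_mem hb hv
  have hS𝒯 : S ∈ 𝒯 := subset_torsGen rfl
  have hUT : U ⊆ T := hcov.1.subset
  constructor
  · intro h
    have hc := (hr.2 T U 𝒯 𝒯 hT hU h𝒯 h𝒯 h (hr.1.refl 𝒯)).1
    have e1 : T ∩ 𝒯 = 𝒯 := Set.inter_eq_right.mpr h𝒯T
    have e2 : U ∩ 𝒯 = 𝒯 ∩ Perp S := by
      apply subset_antisymm
      · rintro x ⟨hxU, hx𝒯⟩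
        exact ⟨hx𝒯, ((hUeq ▸ hxU : x ∈ T ∩ Perp S)).2⟩
      · intro x hx
        exact ⟨hBU hx, hx.1⟩
    rwa [e1, e2] at hc
  · intro h
    have hc := (hr.2 𝒯 (𝒯 ∩ Perp S) U U h𝒯 hB hU hU h (hr.1.refl U)).2
    have e1 : torsGen A (𝒯 ∪ U) = T := by
      have hVtors : IsTorsionClass A (torsGen A (𝒯 ∪ U)) :=
        isTorsionClass_torsGen ⟨T, hT, Set.union_subset h𝒯T hUT⟩
      rcases hcov.2 _ hVtors
          (Set.Subset.trans Set.subset_union_right subset_torsGen)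
          (torsGen_subset hT (Set.union_subset h𝒯T hUT)) with hVU | hVT
      · exfalso
        have : S ∈ torsGen A (𝒯 ∪ U) := subset_torsGen (Or.inl hS𝒯)
        rw [hVU] at this
        exact hSU this
      · exact hVT
    have e2 : torsGen A ((𝒯 ∩ Perp S) ∪ U) = U :=
      subset_antisymm (torsGen_subset hU (Set.union_subset hBU (subset_refl U)))
        (Set.Subset.trans Set.subset_union_right subset_torsGen)
    rwa [e1, e2] at hc

end Cover

/-- If a module filtered by quotients of a brick `S₁` lies in a subquotient-closed class `D`
and admits a nonzero map to `S₁`, then `S₁ ∈ D`. -/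
lemma brick_mem_of_filt {S₁ : ModuleCat.{u} A} (hb : IsBrick A S₁)
    {D : Set (ModuleCat.{u} A)} (hD : SubquotClosed D) :
    ∀ M ∈ FiltCl (QuotCl S₁), M ∈ D → ∀ f : M →ₗ[A] S₁, f ≠ 0 → S₁ ∈ D := by
  have key : FiltCl (QuotCl S₁) ⊆
      {M | M ∈ D → ∀ f : M →ₗ[A] S₁, f ≠ 0 → S₁ ∈ D} := by
    apply filtCl_subset
    refine ⟨?_, ?_, ?_, ?_⟩
    · rintro M ⟨g, hg⟩ hMD f hf
      have hfg : f.comp g ≠ 0 := by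
        intro h0
        apply hf
        ext m
        obtain ⟨s, rfl⟩ := hg m
        have := DFunLike.congr_fun h0 s
        simpa using this
      have hbij := hb.2.2 (f.comp g) hfg
      have hginj : Function.Injective g := by
        intro a b hab
        apply hbij.injective
        simp only [LinearMap.comp_apply, hab]
      have e := LinearEquiv.ofBijective g ⟨hginj, hg⟩
      exact hD.2 M hMD S₁ e.symm.toLinearMap e.symm.surjective
    · intro M hsub hMD f hf
      exact absurd (by ext x; rw [Subsingleton.elim x 0]; simp) hf
    · rintro M N hM ⟨e⟩ hND f hf
      have hMD : M ∈ D := hD.2 N hND M e.symm.toLinearMap e.symm.surjective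
      apply hM hMD (f.comp e.toLinearMap)
      intro h0
      apply hf
      ext n
      have := DFunLike.congr_fun h0 (e.symm n)
      simpa using this
    · intro M X h1 h2 hMD f hf
      by_cases hres : f.comp X.subtype = 0
      · have hle : ∀ x ∈ X, f x = 0 := by
          intro x hx
          have := DFunLike.congr_fun hres ⟨x, hx⟩
          simpa using this
        have hq : X.liftQ f hle ≠ 0 := by
          intro h0
          apply hf
          ext m
          have h1' : X.liftQ f hle (Submodule.Quotient.mk m) = f m :=
            Submodule.liftQ_apply X f m
          rw [← h1', h0]
          simp
        exact h2 (hD.2 M hMD _ X.mkQ (Submodule.mkQ_surjective X)) _ hq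
      · exact h1 (hD.1 M hMD X) _ hres
  intro M hM
  exact key hM

end BrickForcing
namespace BrickForcing

section Field

variable {A : Type u} [Ring A]

/-- Two finite bricks (in fact any finite modules) that are mutually subquotients of one
another over a finite-dimensional algebra are isomorphic. -/
lemma iso_of_mutual_sq (k : Type u) [Field k] [Algebra k A] [FiniteDimensional k A]
    {S₁ S₂ : ModuleCat.{u} A}
    (h1 : Module.Finite A S₁) (h2 : Module.Finite A S₂)
    (hA : S₁ ∈ Sq S₂) (hB : S₂ ∈ Sq S₁) : Nonempty (S₁ ≃ₗ[A] S₂) := by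
  obtain ⟨L, f, g, hf, hg⟩ := hA
  obtain ⟨L', f', g', hf', hg'⟩ := hB
  haveI : IsNoetherian k A := IsNoetherian.iff_fg.mpr ‹FiniteDimensional k A›
  haveI : IsNoetherianRing A := isNoetherian_of_tower k inferInstance
  haveI hS1 : Module.Finite A S₁ := h1
  haveI hS2 : Module.Finite A S₂ := h2
  haveI : IsNoetherian A S₂ := isNoetherian_of_isNoetherianRing_of_finite A S₂
  haveI : IsNoetherian A S₁ := isNoetherian_of_isNoetherianRing_of_finite A S₁
  haveI hLfin : Module.Finite A L := by
    have hfg : (LinearMap.range f).FG := IsNoetherian.noetherian _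
    haveI : Module.Finite A (LinearMap.range f) := Module.Finite.iff_fg.mpr hfg
    exact Module.Finite.equiv (LinearEquiv.ofInjective f hf).symm
  haveI hL'fin : Module.Finite A L' := by
    have hfg : (LinearMap.range f').FG := IsNoetherian.noetherian _
    haveI : Module.Finite A (LinearMap.range f') := Module.Finite.iff_fg.mpr hfg
    exact Module.Finite.equiv (LinearEquiv.ofInjective f' hf').symm
  -- set up `k`-module structures
  letI m1 : Module k S₁ := Module.compHom _ (algebraMap k A)
  letI m2 : Module k S₂ := Module.compHom _ (algebraMap k A)
  letI m3 : Module k L := Module.compHom _ (algebraMap k A)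
  letI m4 : Module k L' := Module.compHom _ (algebraMap k A)
  haveI t1 : IsScalarTower k A S₁ :=
    ⟨fun c a m => by rw [Algebra.smul_def, mul_smul]; rfl⟩
  haveI t2 : IsScalarTower k A S₂ :=
    ⟨fun c a m => by rw [Algebra.smul_def, mul_smul]; rfl⟩
  haveI t3 : IsScalarTower k A L :=
    ⟨fun c a m => by rw [Algebra.smul_def, mul_smul]; rfl⟩
  haveI t4 : IsScalarTower k A L' :=
    ⟨fun c a m => by rw [Algebra.smul_def, mul_smul]; rfl⟩
  haveI : Module.Finite k S₁ := Module.Finite.trans A S₁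
  haveI : Module.Finite k S₂ := Module.Finite.trans A S₂
  haveI : Module.Finite k L := Module.Finite.trans A L
  haveI : Module.Finite k L' := Module.Finite.trans A L'
  -- finrank comparisons
  have hgle : Module.finrank k S₁ ≤ Module.finrank k L := by
    have hr := LinearMap.finrank_range_le (g.restrictScalars k)
    have : LinearMap.range (g.restrictScalars k) = ⊤ := by
      rw [LinearMap.range_eq_top]
      exact hg
    rw [this, finrank_top] at hr
    exact hr
  have hfle : Module.finrank k L ≤ Module.finrank k S₂ :=
    LinearMap.finrank_le_finrank_of_injective (f := f.restrictScalars k) hf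
  have hgle' : Module.finrank k S₂ ≤ Module.finrank k L' := by
    have hr := LinearMap.finrank_range_le (g'.restrictScalars k)
    have : LinearMap.range (g'.restrictScalars k) = ⊤ := by
      rw [LinearMap.range_eq_top]
      exact hg'
    rw [this, finrank_top] at hr
    exact hr
  have hfle' : Module.finrank k L' ≤ Module.finrank k S₁ :=
    LinearMap.finrank_le_finrank_of_injective (f := f'.restrictScalars k) hf'
  have h12 : Module.finrank k S₁ = Module.finrank k S₂ :=
    le_antisymm (hgle.trans hfle) (hgle'.trans hfle')
  have hL1 : Module.finrank k L = Module.finrank k S₁ :=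
    le_antisymm (hfle.trans h12.ge) hgle
  have hL2 : Module.finrank k L = Module.finrank k S₂ := hL1.trans h12
  -- conclude
  have hginj : Function.Injective g := by
    have := (LinearMap.injective_iff_surjective_of_finrank_eq_finrank
      (f := g.restrictScalars k) hL1).mpr hg
    exact this
  have hfsurj : Function.Surjective f := by
    have := (LinearMap.injective_iff_surjective_of_finrank_eq_finrank
      (f := f.restrictScalars k) hL2).mp hf
    exact this
  exact ⟨(LinearEquiv.ofBijective g ⟨hginj, hg⟩).symm.trans
    (LinearEquiv.ofBijective f ⟨hf, hfsurj⟩)⟩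

end Field

end BrickForcing
namespace BrickForcing

variable {A : Type u} [Ring A]

/-- If the contraction of a covering pair labelled `S` is forced by the contraction of a
covering pair labelled `S'`, then `S` is a subquotient of `S'`. -/
lemma mem_sq_of_forcing {T U T' U' : Set (ModuleCat.{u} A)} {S S' : ModuleCat.{u} A}
    (hT : IsTorsionClass A T) (hU : IsTorsionClass A U)
    (hcov : U ⊂ T ∧ ∀ V : Set (ModuleCat.{u} A), IsTorsionClass A V →
      U ⊆ V → V ⊆ T → V = U ∨ V = T)
    (hb : IsBrick A S) (hmem : S ∈ T) (hv : ∀ U'' ∈ U, ∀ f : U'' →ₗ[A] S, f = 0)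
    (hmem' : S' ∈ T') (hnot' : S' ∉ U')
    (h : ∀ r : Set (ModuleCat.{u} A) → Set (ModuleCat.{u} A) → Prop,
      IsLatticeCongruence A r → (r T U ↔ r T' U')) :
    S ∈ Sq S' := by
  have hcong := isLatticeCongruence_interD (subquotClosed_sq S')
  have hne' : ¬ (T' ∩ Sq S' = U' ∩ Sq S') := by
    intro hEq
    have : S' ∈ U' ∩ Sq S' := hEq ▸ (⟨hmem', self_mem_sq S'⟩ : S' ∈ T' ∩ Sq S')
    exact hnot' this.1
  have hne : ¬ (T ∩ Sq S' = U ∩ Sq S') := fun hEq => hne' ((h _ hcong).mp hEq)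
  have hred := reduction hcong hT hU hcov hb hmem hv
  have hne𝒯 : ¬ (torsGen A {S} ∩ Sq S' = (torsGen A {S} ∩ Perp S) ∩ Sq S') :=
    fun hEq => hne (hred.mpr hEq)
  have hsub : (torsGen A {S} ∩ Perp S) ∩ Sq S' ⊆ torsGen A {S} ∩ Sq S' :=
    fun x hx => ⟨hx.1.1, hx.2⟩
  have hns : ¬ (torsGen A {S} ∩ Sq S' ⊆ (torsGen A {S} ∩ Perp S) ∩ Sq S') :=
    fun hh => hne𝒯 (subset_antisymm hh hsub)
  obtain ⟨M, hM, hMn⟩ := Set.not_subset.mp hns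
  have hM𝒯 : M ∈ torsGen A {S} := hM.1
  have hfin : Module.Finite A M :=
    (isTorsionClass_torsGen ⟨T, hT, Set.singleton_subset_iff.mpr hmem⟩).1 M hM𝒯
  have hMperp : M ∉ Perp S := fun hp => hMn ⟨⟨hM𝒯, hp⟩, hM.2⟩
  obtain ⟨f, hf⟩ : ∃ f : M →ₗ[A] S, f ≠ 0 := by
    by_contra hc
    push_neg at hc
    exact hMperp ⟨hfin, hc⟩
  have hMfilt : M ∈ FiltCl (QuotCl S) := by
    rw [← torsGen_singleton_eq hb.2.1]
    exact hM𝒯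
  exact brick_mem_of_filt hb (subquotClosed_sq S') M hMfilt hM.2 f hf

end BrickForcing

/-- Given covering pairs `U₁ ⋖ T₁` and `U₂ ⋖ T₂` of torsion classes with labelling
bricks `S₁` and `S₂`, the bricks are isomorphic iff every lattice congruence contracts
the first covering pair exactly when it contracts the second. -/
theorem brick_iso_iff_forcing_equivalent (k A : Type u) [Field k] [Ring A] [Algebra k A]
    [FiniteDimensional k A]
    (T₁ U₁ T₂ U₂ : Set (ModuleCat.{u} A))
    (hT₁ : IsTorsionClass A T₁) (hU₁ : IsTorsionClass A U₁)
    (hT₂ : IsTorsionClass A T₂) (hU₂ : IsTorsionClass A U₂)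
    (hcov₁ : U₁ ⊂ T₁ ∧ ∀ V : Set (ModuleCat.{u} A), IsTorsionClass A V →
      U₁ ⊆ V → V ⊆ T₁ → V = U₁ ∨ V = T₁)
    (hcov₂ : U₂ ⊂ T₂ ∧ ∀ V : Set (ModuleCat.{u} A), IsTorsionClass A V →
      U₂ ⊆ V → V ⊆ T₂ → V = U₂ ∨ V = T₂)
    (S₁ S₂ : ModuleCat.{u} A)
    (hS₁ : IsBrick A S₁ ∧ S₁ ∈ T₁ ∧ ∀ U' ∈ U₁, ∀ f : U' →ₗ[A] S₁, f = 0)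
    (hS₂ : IsBrick A S₂ ∧ S₂ ∈ T₂ ∧ ∀ U' ∈ U₂, ∀ f : U' →ₗ[A] S₂, f = 0) :
    Nonempty (S₁ ≃ₗ[A] S₂) ↔
    ∀ r : Set (ModuleCat.{u} A) → Set (ModuleCat.{u} A) → Prop,
      IsLatticeCongruence A r → (r T₁ U₁ ↔ r T₂ U₂) := by
  constructor
  · rintro ⟨e⟩ r hr
    have red1 := BrickForcing.reduction hr hT₁ hU₁ hcov₁ hS₁.1 hS₁.2.1 hS₁.2.2
    have red2 := BrickForcing.reduction hr hT₂ hU₂ hcov₂ hS₂.1 hS₂.2.1 hS₂.2.2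
    have hg1 : IsTorsionClass A (torsGen A {S₁}) :=
      BrickForcing.isTorsionClass_torsGen ⟨T₁, hT₁, Set.singleton_subset_iff.mpr hS₁.2.1⟩
    have hg2 : IsTorsionClass A (torsGen A {S₂}) :=
      BrickForcing.isTorsionClass_torsGen ⟨T₂, hT₂, Set.singleton_subset_iff.mpr hS₂.2.1⟩
    have hgen : torsGen A {S₁} = torsGen A {S₂} := by
      apply subset_antisymm
      · refine BrickForcing.torsGen_subset hg2 (Set.singleton_subset_iff.mpr ?_)
        exact hg2.2.2.1 S₂ S₁ (BrickForcing.subset_torsGen rfl) ⟨e.symm⟩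
      · refine BrickForcing.torsGen_subset hg1 (Set.singleton_subset_iff.mpr ?_)
        exact hg1.2.2.1 S₁ S₂ (BrickForcing.subset_torsGen rfl) ⟨e⟩
    have hperp : BrickForcing.Perp S₁ = BrickForcing.Perp S₂ := by
      ext M
      constructor
      · rintro ⟨hfin, hv⟩
        refine ⟨hfin, fun f => ?_⟩
        have h0 := hv (e.symm.toLinearMap.comp f)
        ext x
        have hx := DFunLike.congr_fun h0 x
        simp only [LinearMap.comp_apply, LinearMap.zero_apply,
          LinearEquiv.coe_coe] at hx ⊢
        exact e.symm.injective (by rw [map_zero]; exact hx)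
      · rintro ⟨hfin, hv⟩
        refine ⟨hfin, fun f => ?_⟩
        have h0 := hv (e.toLinearMap.comp f)
        ext x
        have hx := DFunLike.congr_fun h0 x
        simp only [LinearMap.comp_apply, LinearMap.zero_apply,
          LinearEquiv.coe_coe] at hx ⊢
        exact e.injective (by rw [map_zero]; exact hx)
    rw [red1, red2, hgen, hperp]
  · intro h
    have h12 : S₁ ∈ BrickForcing.Sq S₂ :=
      BrickForcing.mem_sq_of_forcing hT₁ hU₁ hcov₁ hS₁.1 hS₁.2.1 hS₁.2.2 hS₂.2.1
        (BrickForcing.brick_not_mem hS₂.1 hS₂.2.2) h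
    have h21 : S₂ ∈ BrickForcing.Sq S₁ :=
      BrickForcing.mem_sq_of_forcing hT₂ hU₂ hcov₂ hS₂.1 hS₂.2.1 hS₂.2.2 hS₁.2.1
        (BrickForcing.brick_not_mem hS₁.1 hS₁.2.2) (fun r hr => (h r hr).symm)
    exact BrickForcing.iso_of_mutual_sq k hS₁.1.2.1 hS₂.1.2.1 h12 h21
end

section
/- Let k be a field, A a finite-dimensional k-algebra, T and U torsion classes in mod A, and X a nonzero finitely generated A-module with X ∈ T and Hom_A(U', X) = 0 for all U' ∈ U. Then there exists an A-endomorphism f of X whose image is a brick S satisfying S ∈ T and Hom_A(U', S) = 0 for all U' ∈ U. -/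
universe u

/-- Let `T`, `U` be torsion classes and `X` a nonzero finitely generated module with
`X ∈ T` and `Hom_A(U', X) = 0` for all `U' ∈ U`. Then `X` has an endomorphism whose
image is a brick `S` with `S ∈ T` and `Hom_A(U', S) = 0` for all `U' ∈ U`. -/
theorem exists_endomorphism_image_brick (k A : Type u) [Field k] [Ring A] [Algebra k A]
    [FiniteDimensional k A]
    (T U : Set (ModuleCat.{u} A)) (hT : IsTorsionClass A T) (hU : IsTorsionClass A U)
    (X : ModuleCat.{u} A) (hXfin : Module.Finite A X) (hXne : Nontrivial X)
    (hXT : X ∈ T) (hXU : ∀ U' ∈ U, ∀ f : U' →ₗ[A] X, f = 0) :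
    ∃ f : X →ₗ[A] X,
      IsBrick A (ModuleCat.of A (LinearMap.range f)) ∧
      ModuleCat.of A (LinearMap.range f) ∈ T ∧
      ∀ U' ∈ U, ∀ g : U' →ₗ[A] LinearMap.range f, g = 0 := by
  letI : Module k X := Module.compHom X (algebraMap k A)
  haveI : IsScalarTower k A X := ⟨fun c a x => by
    show (c • a) • x = algebraMap k A c • (a • x)
    rw [Algebra.smul_def, mul_smul]⟩
  haveI : Module.Finite k X := Module.Finite.trans A X
  haveI : IsArtinian A X := isArtinian_of_tower k inferInstance
  haveI : IsNoetherian A X := isNoetherian_of_tower k inferInstance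
  -- The set of nonzero images of endomorphisms of X
  set P : Set (Submodule A X) :=
    {S | S ≠ ⊥ ∧ ∃ f : X →ₗ[A] X, LinearMap.range f = S} with hP
  have hPne : (⊤ : Submodule A X) ∈ P := by
    refine ⟨fun hbot => ?_, LinearMap.id, LinearMap.range_id⟩
    obtain ⟨x, hx⟩ := exists_ne (0 : X)
    exact hx (by simpa using (hbot ▸ Submodule.mem_top : x ∈ (⊥ : Submodule A X)))
  obtain ⟨S, hSP, hSmin⟩ := IsArtinian.set_has_minimal P ⟨⊤, hPne⟩
  obtain ⟨hSne, f, hf⟩ := hSP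
  subst hf
  refine ⟨f, ⟨?_, ?_, ?_⟩, ?_, ?_⟩
  · exact Submodule.nontrivial_iff_ne_bot.mpr hSne
  · exact Module.Finite.iff_fg.mpr (IsNoetherian.noetherian _)
  · intro g hg
    have hgs : ∃ s, g s ≠ 0 := by
      by_contra hcon
      push_neg at hcon
      exact hg (LinearMap.ext fun s => by simpa using hcon s)
    obtain ⟨s, hs⟩ := hgs
    have hrange : LinearMap.range ((LinearMap.range f).subtype ∘ₗ (g ∘ₗ f.rangeRestrict))
        = (LinearMap.range g).map (LinearMap.range f).subtype := by
      rw [LinearMap.range_comp, LinearMap.range_comp, LinearMap.range_rangeRestrict,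
        Submodule.map_top]
    have hle : LinearMap.range ((LinearMap.range f).subtype ∘ₗ (g ∘ₗ f.rangeRestrict))
        ≤ LinearMap.range f := by
      rw [hrange]; exact Submodule.map_subtype_le _ _
    have hhne : LinearMap.range ((LinearMap.range f).subtype ∘ₗ (g ∘ₗ f.rangeRestrict)) ≠ ⊥ := by
      obtain ⟨x, hx⟩ := LinearMap.surjective_rangeRestrict f s
      intro hbot
      have hx0 : ((LinearMap.range f).subtype ∘ₗ (g ∘ₗ f.rangeRestrict)) x = 0 := by
        have := LinearMap.mem_range_self ((LinearMap.range f).subtype ∘ₗ (g ∘ₗ f.rangeRestrict)) x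
        rwa [hbot, Submodule.mem_bot] at this
      exact hs ((Submodule.injective_subtype (LinearMap.range f))
        (by rw [map_zero, ← hx]; exact hx0))
    have heq : LinearMap.range ((LinearMap.range f).subtype ∘ₗ (g ∘ₗ f.rangeRestrict))
        = LinearMap.range f := by
      by_contra hne
      exact hSmin _ ⟨hhne, _, rfl⟩ (lt_of_le_of_ne hle hne)
    have hsurj : Function.Surjective g := by
      rw [← LinearMap.range_eq_top]
      have hmap : (LinearMap.range g).map (LinearMap.range f).subtype
          = (⊤ : Submodule A (LinearMap.range f)).map (LinearMap.range f).subtype := by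
        rw [Submodule.map_top, Submodule.range_subtype, ← hrange, heq]
      exact Submodule.map_injective_of_injective
        (Submodule.injective_subtype (LinearMap.range f)) hmap
    haveI : IsNoetherian A (ModuleCat.of A ↥(LinearMap.range f)) :=
      (inferInstance : IsNoetherian A ↥(LinearMap.range f))
    exact ⟨IsNoetherian.injective_of_surjective_endomorphism g hsurj, hsurj⟩
  · exact hT.2.2.2.1 X (ModuleCat.of A (LinearMap.range f)) f.rangeRestrict
      (LinearMap.surjective_rangeRestrict f) hXT
  · intro U' hU' g
    have h0 : (LinearMap.range f).subtype ∘ₗ g = 0 := hXU U' hU' _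
    exact LinearMap.ext fun u => (Submodule.injective_subtype _)
      (by simpa using LinearMap.congr_fun h0 u)
end

section
/- Let k be a field and A a finite-dimensional k-algebra. Let S and S' be bricks with S ≇ S', Hom_A(S, S') = 0 and Hom_A(S', S) = 0 (i.e. {S, S'} is a semibrick). If 0 → S → X → S' → 0 is a non-split short exact sequence of finitely generated A-modules, then X is a brick. -/
universe u

section Helpers
variable {R M N P : Type*} [Ring R] [AddCommGroup M] [AddCommGroup N] [AddCommGroup P]
  [Module R M] [Module R N] [Module R P]

lemma my_lift_of_le_ker (g : M →ₗ[R] N) (hg : Function.Surjective g) (φ : M →ₗ[R] P)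
    (h : LinearMap.ker g ≤ LinearMap.ker φ) : ∃ ψ : N →ₗ[R] P, ψ.comp g = φ := by
  let e := g.quotKerEquivOfSurjective hg
  refine ⟨((LinearMap.ker g).liftQ φ h).comp e.symm.toLinearMap, ?_⟩
  ext x
  have hx : e ((LinearMap.ker g).mkQ x) = g x := rfl
  have : e.symm (g x) = (LinearMap.ker g).mkQ x := by
    rw [LinearEquiv.symm_apply_eq, hx]
  simp [this]

lemma my_factor_inj (f : M →ₗ[R] N) (hf : Function.Injective f) (φ : P →ₗ[R] N)
    (h : LinearMap.range φ ≤ LinearMap.range f) : ∃ u : P →ₗ[R] M, f.comp u = φ := by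
  refine ⟨(LinearEquiv.ofInjective f hf).symm.toLinearMap.comp
    (φ.codRestrict (LinearMap.range f) (fun x => h ⟨x, rfl⟩)), ?_⟩
  ext x
  have key : ∀ y : LinearMap.range f, f ((LinearEquiv.ofInjective f hf).symm y) = y := by
    intro y
    conv_lhs => rw [← LinearEquiv.ofInjective_apply (h := hf)]
    exact congrArg _ ((LinearEquiv.ofInjective f hf).apply_symm_apply y)
  simp [key]

end Helpers

/-- If `{S, S'}` is a semibrick with `S ≇ S'` and `0 → S → X → S' → 0` is a non-split
short exact sequence of finitely generated modules, then `X` is a brick. -/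
theorem middle_of_nonsplit_extension_of_semibrick_is_brick (k A : Type u) [Field k]
    [Ring A] [Algebra k A] [FiniteDimensional k A]
    (S S' X : ModuleCat.{u} A) (hS : IsBrick A S) (hS' : IsBrick A S')
    (hiso : ¬ Nonempty (S ≃ₗ[A] S'))
    (h1 : ∀ f : S →ₗ[A] S', f = 0) (h2 : ∀ f : S' →ₗ[A] S, f = 0)
    (hXfin : Module.Finite A X)
    (f : S →ₗ[A] X) (g : X →ₗ[A] S')
    (hf : Function.Injective f) (hg : Function.Surjective g)
    (hexact : LinearMap.range f = LinearMap.ker g)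
    (hnonsplit : ¬ ∃ σ : S' →ₗ[A] X, g.comp σ = LinearMap.id) :
    IsBrick A X := by
  have hgf : ∀ s : S, g (f s) = 0 := by
    intro s
    have : f s ∈ LinearMap.ker g := hexact ▸ LinearMap.mem_range_self f s
    exact this
  refine ⟨?_, hXfin, ?_⟩
  · haveI := hS.1
    obtain ⟨s, hs⟩ := exists_ne (0 : S)
    exact ⟨f s, 0, fun h => hs (hf (by simpa using h))⟩
  · intro φ hφ
    -- g ∘ φ ∘ f = 0 since it is a map S → S'
    have hcomp : (g.comp φ).comp f = 0 := h1 _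
    have hcomp' : ∀ s : S, g (φ (f s)) = 0 := fun s => LinearMap.congr_fun hcomp s
    -- ψ : S → S with f ∘ ψ = φ ∘ f
    have hrange : LinearMap.range (φ.comp f) ≤ LinearMap.range f := by
      rintro x ⟨s, rfl⟩
      rw [hexact]
      exact hcomp' s
    obtain ⟨ψ, hψ⟩ := my_factor_inj f hf (φ.comp f) hrange
    have hψ1 : ∀ s : S, f (ψ s) = φ (f s) := fun s => LinearMap.congr_fun hψ s
    -- φ' : S' → S' with φ' ∘ g = g ∘ φ
    have hker : LinearMap.ker g ≤ LinearMap.ker (g.comp φ) := by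
      intro x hx
      rw [← hexact] at hx
      obtain ⟨s, rfl⟩ := hx
      exact hcomp' s
    obtain ⟨φ', hφ'⟩ := my_lift_of_le_ker g hg (g.comp φ) hker
    have hφ'1 : ∀ x : X, φ' (g x) = g (φ x) := fun x => LinearMap.congr_fun hφ' x
    by_cases hψ0 : ψ = 0
    · -- φ ∘ f = 0, so φ factors through g via h : S' → X
      have hφf : ∀ s : S, φ (f s) = 0 := by
        intro s; rw [← hψ1 s, hψ0]; simp
      have hker2 : LinearMap.ker g ≤ LinearMap.ker φ := by
        intro x hx
        rw [← hexact] at hx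
        obtain ⟨s, rfl⟩ := hx
        exact hφf s
      obtain ⟨h, hh⟩ := my_lift_of_le_ker g hg φ hker2
      have hh1 : ∀ x : X, h (g x) = φ x := fun x => LinearMap.congr_fun hh x
      by_cases hgh : g.comp h = 0
      · -- then h factors through f, hence h = 0 by semibrick condition, hence φ = 0
        have hr : LinearMap.range h ≤ LinearMap.range f := by
          rintro x ⟨s', rfl⟩
          rw [hexact]
          exact LinearMap.congr_fun hgh s'
        obtain ⟨u, hu⟩ := my_factor_inj f hf h hr
        have h0 : h = 0 := by rw [← hu, h2 u]; simp
        refine absurd ?_ hφ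
        ext x
        rw [← hh1 x, h0]
        simp
      · -- g ∘ h is a nonzero endomorphism of the brick S', hence bijective: splitting
        have hb := hS'.2.2 _ hgh
        refine absurd ⟨h.comp (LinearEquiv.ofBijective _ hb).symm.toLinearMap, ?_⟩ hnonsplit
        ext s'
        have : g (h ((LinearEquiv.ofBijective _ hb).symm s')) =
            (LinearEquiv.ofBijective (g.comp h) hb) ((LinearEquiv.ofBijective _ hb).symm s') := rfl
        simp [this]
    · -- ψ ≠ 0, hence bijective
      have hψb := hS.2.2 _ hψ0
      by_cases hφ'0 : φ' = 0
      · -- g ∘ φ = 0, so φ factors through f: gives a retraction, contradicting nonsplit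
        have hr : LinearMap.range φ ≤ LinearMap.range f := by
          rintro x ⟨y, rfl⟩
          rw [hexact]
          show g (φ y) = 0
          rw [← hφ'1, hφ'0]; simp
        obtain ⟨τ, hτ⟩ := my_factor_inj f hf φ hr
        have hτ1 : ∀ x : X, f (τ x) = φ x := fun x => LinearMap.congr_fun hτ x
        set eψ := LinearEquiv.ofBijective ψ hψb with heψ
        set σ₀ : X →ₗ[A] S := eψ.symm.toLinearMap.comp τ with hσ₀def
        have hσ₀ : ∀ s : S, σ₀ (f s) = s := by
          intro s
          have h1' : τ (f s) = ψ s := hf (by rw [hτ1, hψ1])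
          show eψ.symm (τ (f s)) = s
          rw [h1']
          exact eψ.symm_apply_apply s
        have hker3 : LinearMap.ker g ≤ LinearMap.ker (LinearMap.id - f.comp σ₀) := by
          intro x hx
          rw [← hexact] at hx
          obtain ⟨s, rfl⟩ := hx
          show f s - f (σ₀ (f s)) = 0
          rw [hσ₀, sub_self]
        obtain ⟨h, hh⟩ := my_lift_of_le_ker g hg (LinearMap.id - f.comp σ₀) hker3
        refine absurd ⟨h, ?_⟩ hnonsplit
        ext s'
        obtain ⟨x, rfl⟩ := hg s'
        have h1' : h (g x) = x - f (σ₀ x) := LinearMap.congr_fun hh x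
        show g (h (g x)) = g x
        rw [h1', map_sub, hgf, sub_zero]
      · -- φ' ≠ 0, hence bijective; conclude φ is bijective
        have hφ'b := hS'.2.2 _ hφ'0
        constructor
        · rw [← LinearMap.ker_eq_bot, eq_bot_iff]
          intro x hx
          have hx0 : φ x = 0 := hx
          have hgx : g x = 0 := by
            apply hφ'b.injective
            rw [hφ'1, hx0, map_zero, map_zero]
          have : x ∈ LinearMap.range f := by rw [hexact]; exact hgx
          obtain ⟨s, rfl⟩ := this
          have : ψ s = 0 := hf (by rw [hψ1, hx0, map_zero])
          have : s = 0 := hψb.injective (by rw [this, map_zero])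
          simp [this]
        · intro y
          obtain ⟨t', ht'⟩ := hφ'b.surjective (g y)
          obtain ⟨x₀, rfl⟩ := hg t'
          have hker4 : y - φ x₀ ∈ LinearMap.range f := by
            rw [hexact]
            show g (y - φ x₀) = 0
            rw [map_sub, ← hφ'1, ht', sub_self]
          obtain ⟨s, hs⟩ := hker4
          obtain ⟨s₁, hs₁⟩ := hψb.surjective s
          refine ⟨x₀ + f s₁, ?_⟩
          have hfs : φ (f s₁) = y - φ x₀ := by rw [← hψ1, hs₁, hs]
          rw [map_add, hfs]
          abel
end
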